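/- arXiv:2103.04359 — 8 statements merged into one kernel-verified Lean document; each statement's English description precedes it below -/
import Mathlib

section
/- For every integer q ≥ 2, there exists a labeling w : Fin q × Fin q → ZMod q of the arcs of the complete digraph on q vertices such that no non-trivial directed cycle has arc-labels summing to zero. (Concretely, the labeling w(i,j) = 1 if i < j and w(i,j) = 0 otherwise works.) -/
/-- A directed cycle in the complete digraph on `Fin n`: a list of at least two
pairwise distinct vertices, traversed cyclically. -/
def IsCycle {n : ℕ} (l : List (Fin n)) : Prop :=
  l.Nodup ∧ 2 ≤ l.length

/-- The sum of arc-labels along the cyclic traversal of `l`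
(arcs `(v₀,v₁), …, (v_{k-1},v₀)`). -/
def cycleSum {n : ℕ} {A : Type*} [AddCommMonoid A]
    (w : Fin n → Fin n → A) (l : List (Fin n)) : A :=
  ((l.zip (l.rotate 1)).map fun p => w p.1 p.2).sum

/-- A directed path from `u` to `v`: a list of at least two pairwise distinct
vertices starting at `u` and ending at `v`. -/
def IsPath {n : ℕ} (l : List (Fin n)) (u v : Fin n) : Prop :=
  l.Nodup ∧ 2 ≤ l.length ∧ l.head? = some u ∧ l.getLast? = some v

/-- The sum of arc-labels along the path `l`. -/
def pathSum {n : ℕ} {A : Type*} [AddCommMonoid A]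
    (w : Fin n → Fin n → A) (l : List (Fin n)) : A :=
  ((l.zip l.tail).map fun p => w p.1 p.2).sum

/-- A labeling is zero-sum-free if no directed cycle has arc-labels summing to zero. -/
def ZeroSumFree {n : ℕ} {A : Type*} [AddCommMonoid A] (w : Fin n → Fin n → A) : Prop :=
  ∀ l : List (Fin n), IsCycle l → cycleSum w l ≠ 0

lemma sum_ite_eq_countP {α : Type*} (q : ℕ) (p : α → Bool) (L : List α) :
    (L.map fun a => if p a then (1 : ZMod q) else 0).sum = (L.countP p : ZMod q) := by
  induction L with
  | nil => simp
  | cons a t ih =>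
    by_cases h : p a <;> simp [List.countP_cons, h, ih, add_comm]

theorem stmt0 (q : ℕ) (hq : 2 ≤ q) :
    ∃ w : Fin q → Fin q → ZMod q, ZeroSumFree w := by
  refine ⟨fun i j => if i < j then 1 else 0, ?_⟩
  rintro l ⟨hnd, hlen⟩
  set L := l.zip (l.rotate 1) with hL
  have hLlen : L.length = l.length := by simp [hL]
  have hget : ∀ i (h : i < l.length),
      L[i]'(by omega) = (l[i], l[(i+1) % l.length]'(Nat.mod_lt _ (by omega))) := by
    intro i h
    simp [hL, List.getElem_rotate]
  have hne : ∀ i (h : i < l.length), i ≠ (i+1) % l.length := by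
    intro i h
    rcases Nat.lt_or_ge (i+1) l.length with h' | h'
    · rw [Nat.mod_eq_of_lt h']; omega
    · have : i + 1 = l.length := by omega
      rw [this, Nat.mod_self]; omega
  -- the pair at the minimum is an ascent
  have hc1 : 0 < L.countP (fun a => decide (a.1 < a.2)) := by
    have hne' : l.toFinset.Nonempty := by
      rcases l with _ | ⟨a, t⟩
      · simp at hlen
      · exact ⟨a, by simp⟩
    obtain ⟨i, hi, hmi⟩ := List.mem_iff_getElem.1 (List.mem_toFinset.1 (l.toFinset.min'_mem hne'))
    rw [List.countP_pos_iff]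
    refine ⟨L[i]'(by omega), List.getElem_mem _, ?_⟩
    rw [hget i hi]
    simp only [decide_eq_true_eq]
    have hmem : l[(i+1) % l.length]'(Nat.mod_lt _ (by omega)) ∈ l.toFinset := by
      simp [List.getElem_mem]
    have hle := l.toFinset.min'_le _ hmem
    rw [← hmi] at hle
    refine lt_of_le_of_ne hle ?_
    intro heq
    exact hne i hi ((hnd.getElem_inj_iff).1 heq)
  -- the pair at the maximum is a descent
  have hc2 : L.countP (fun a => decide (a.1 < a.2)) < L.length := by
    have hne' : l.toFinset.Nonempty := by
      rcases l with _ | ⟨a, t⟩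
      · simp at hlen
      · exact ⟨a, by simp⟩
    obtain ⟨i, hi, hmi⟩ := List.mem_iff_getElem.1 (List.mem_toFinset.1 (l.toFinset.max'_mem hne'))
    have hnot : 0 < L.countP (fun a => ¬(decide (a.1 < a.2) : Bool)) := by
      rw [List.countP_pos_iff]
      refine ⟨L[i]'(by omega), List.getElem_mem _, ?_⟩
      rw [hget i hi]
      have hmem : l[(i+1) % l.length]'(Nat.mod_lt _ (by omega)) ∈ l.toFinset := by
        simp [List.getElem_mem]
      have hle := l.toFinset.le_max' _ hmem
      rw [← hmi] at hle
      simpa using hle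
    have := List.length_eq_countP_add_countP (fun a => decide (a.1 < a.2)) (l := L)
    omega
  have hcard : l.length ≤ q := by
    have := hnd.length_le_card
    simpa using this
  have hcq : L.countP (fun a => decide (a.1 < a.2)) < q := by omega
  have : cycleSum (fun i j => if i < j then (1 : ZMod q) else 0) l
      = (L.countP (fun a => decide (a.1 < a.2)) : ZMod q) := by
    rw [cycleSum, ← hL, ← sum_ite_eq_countP]
    simp
  rw [this]
  haveI : NeZero q := ⟨by omega⟩
  intro h
  rw [ZMod.natCast_eq_zero_iff] at h
  have := Nat.le_of_dvd hc1 h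
  omega
end

section
/- Let A be an additive abelian group, n a natural number, u, v, x vertices of Fin n, and w, w' arc-labelings with values in A such that w' is obtained from w by switching by c at the vertex x. If for every a ∈ A there is a directed path from u to v whose w-labels sum to a, then for every a ∈ A there is a directed path from u to v whose w'-labels sum to a. (Switching preserves A-completeness at any pair of vertices.) -/
lemma pathSum_switch {n : ℕ} {A : Type*} [AddCommGroup A]
    (w w' : Fin n → Fin n → A) (c : A) (x : Fin n)
    (hw' : ∀ y z : Fin n, y ≠ z →
      w' y z = if y = x then w y z + c else if z = x then w y z - c else w y z) :
    ∀ l : List (Fin n), l.Nodup →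
      pathSum w' l = pathSum w l + (if l.head? = some x then c else 0)
        - (if l.getLast? = some x then c else 0)
  | [], _ => by simp [pathSum]
  | [a], _ => by simp [pathSum]
  | a :: b :: t, hnd => by
    have hab : a ≠ b := by
      simp only [List.nodup_cons, List.mem_cons] at hnd
      exact fun h => hnd.1 (Or.inl h)
    have hnd' : (b :: t).Nodup := (List.nodup_cons.mp hnd).2
    have IH := pathSum_switch w w' c x hw' (b :: t) hnd'
    have hsplit : pathSum w' (a :: b :: t) = w' a b + pathSum w' (b :: t) := by
      simp [pathSum]
    have hsplitw : pathSum w (a :: b :: t) = w a b + pathSum w (b :: t) := by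
      simp [pathSum]
    have hlast : (a :: b :: t).getLast? = (b :: t).getLast? := by
      simp [List.getLast?_cons_cons]
    have harc : w' a b = w a b + (if a = x then c else 0) - (if b = x then c else 0) := by
      rw [hw' a b hab]
      by_cases ha : a = x
      · have hb : b ≠ x := fun hb => hab (ha.trans hb.symm)
        simp [ha, hb]
      · by_cases hb : b = x <;> simp [ha, hb, sub_eq_add_neg]
    rw [hsplit, hsplitw, harc, IH, hlast]
    simp only [List.head?_cons, Option.some_inj]
    abel

theorem stmt3 {n : ℕ} {A : Type*} [AddCommGroup A]
    (w w' : Fin n → Fin n → A) (c : A) (x u v : Fin n)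
    (hw' : ∀ y z : Fin n, y ≠ z →
      w' y z = if y = x then w y z + c else if z = x then w y z - c else w y z)
    (h : ∀ a : A, ∃ l : List (Fin n), IsPath l u v ∧ pathSum w l = a) :
    ∀ a : A, ∃ l : List (Fin n), IsPath l u v ∧ pathSum w' l = a := by
  intro a
  set δ : A := (if u = x then c else 0) - (if v = x then c else 0) with hδ
  obtain ⟨l, hp, hs⟩ := h (a - δ)
  refine ⟨l, hp, ?_⟩
  obtain ⟨hnd, -, hhead, hlast⟩ := hp
  rw [pathSum_switch w w' c x hw' l hnd, hs, hhead, hlast]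
  have : (some u = some x ↔ u = x) := by simp
  simp only [Option.some_inj]
  rw [hδ]
  abel
end

section
/- Let p ≥ 3 be a prime and let w be a zero-sum-free arc-labeling of the complete digraph on 3 vertices with values in ZMod p. Then there exists a vertex v and two non-trivial directed paths P_1, P_2 (each of length at least 1) ending at v, such that the three values 0, sum of w over the arcs of P_1, and sum of w over the arcs of P_2 are pairwise distinct. -/
/-!
Suppose that at every vertex all nonzero sums of paths ending there coincide. If both arcs of
a path `a → b → c` are nonzero, comparing it with the arc `b → c` gives `w a b + w b c = 0`;
around a directed triangle without zero arcs this yields `2 • w a b = 0`, impossible for `p`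
odd. So each of the two directed triangles has a zero arc. Two opposite zero arcs form a zero
2-cycle. Two zero arcs out of a common vertex `c` (or into `c`) force, through the 3-cycles and
paths at `c`, both arcs between the other two vertices to vanish: again a zero 2-cycle.
-/

variable {n : ℕ} {A : Type*}

section ShortPathsAndCycles

variable [AddCommMonoid A] (w : Fin n → Fin n → A) (a b c : Fin n)

@[simp]
lemma pathSum_pair : pathSum w [a, b] = w a b := by
  simp [pathSum]

@[simp]
lemma pathSum_triple : pathSum w [a, b, c] = w a b + w b c := by
  simp [pathSum]

@[simp]
lemma cycleSum_pair : cycleSum w [a, b] = w a b + w b a := by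
  simp [cycleSum, List.rotate]

@[simp]
lemma cycleSum_triple : cycleSum w [a, b, c] = w a b + w b c + w c a := by
  simp [cycleSum, List.rotate, add_assoc]

variable {a b c}

lemma isPath_pair (hab : a ≠ b) : IsPath [a, b] a b :=
  ⟨by simpa using hab, by simp, rfl, rfl⟩

lemma isPath_triple (hab : a ≠ b) (hac : a ≠ c) (hbc : b ≠ c) : IsPath [a, b, c] a c :=
  ⟨by simp [hab, hac, hbc], by simp, rfl, rfl⟩

lemma isCycle_pair (hab : a ≠ b) : IsCycle [a, b] :=
  ⟨by simpa using hab, by simp⟩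

lemma isCycle_triple (hab : a ≠ b) (hac : a ≠ c) (hbc : b ≠ c) : IsCycle [a, b, c] :=
  ⟨by simp [hab, hac, hbc], by simp⟩

variable {w}

lemma ZeroSumFree.add_swap_ne_zero (hw : ZeroSumFree w) (hab : a ≠ b) : w a b + w b a ≠ 0 := by
  simpa using hw _ (isCycle_pair hab)

lemma ZeroSumFree.add_add_ne_zero (hw : ZeroSumFree w) (hab : a ≠ b) (hac : a ≠ c)
    (hbc : b ≠ c) : w a b + w b c + w c a ≠ 0 := by
  simpa using hw _ (isCycle_triple hab hac hbc)

lemma ZeroSumFree.swap_ne_zero (hw : ZeroSumFree w) (hab : a ≠ b) (h : w a b = 0) :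
    w b a ≠ 0 := by
  simpa [h] using hw.add_swap_ne_zero hab

end ShortPathsAndCycles

def NonzeroPathSumsAgree [AddCommMonoid A] (w : Fin n → Fin n → A) : Prop :=
  ∀ v u₁ u₂ P₁ P₂, IsPath P₁ u₁ v → IsPath P₂ u₂ v →
    pathSum w P₁ ≠ 0 → pathSum w P₂ ≠ 0 → pathSum w P₁ = pathSum w P₂

namespace NonzeroPathSumsAgree

variable [AddCommGroup A] {w : Fin n → Fin n → A} (H : NonzeroPathSumsAgree w) {a b c : Fin n}
include H

lemma arc_eq_arc (hac : a ≠ c) (hbc : b ≠ c) (h₁ : w a c ≠ 0) (h₂ : w b c ≠ 0) :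
    w a c = w b c := by
  simpa using H c a b _ _ (isPath_pair hac) (isPath_pair hbc) (by simpa) (by simpa)

lemma add_eq_arc (hab : a ≠ b) (hac : a ≠ c) (hbc : b ≠ c) {d : Fin n} (hdc : d ≠ c)
    (h₁ : w a b + w b c ≠ 0) (h₂ : w d c ≠ 0) : w a b + w b c = w d c := by
  simpa using H c a d _ _ (isPath_triple hab hac hbc) (isPath_pair hdc) (by simpa) (by simpa)

lemma add_eq_zero (hab : a ≠ b) (hac : a ≠ c) (hbc : b ≠ c) (h₁ : w a b ≠ 0)
    (h₂ : w b c ≠ 0) : w a b + w b c = 0 := by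
  by_contra h
  exact h₁ (by simpa using H.add_eq_arc hab hac hbc hbc h h₂)

lemma exists_eq_zero_of_triangle (htwo : ∀ x : A, x + x = 0 → x = 0) (hab : a ≠ b)
    (hac : a ≠ c) (hbc : b ≠ c) : w a b = 0 ∨ w b c = 0 ∨ w c a = 0 := by
  by_contra! ⟨h₁, h₂, h₃⟩
  have e₁ := H.add_eq_zero hab hac hbc h₁ h₂
  have e₂ := H.add_eq_zero hbc hab.symm hac.symm h₂ h₃
  have e₃ := H.add_eq_zero hac.symm hbc.symm hab h₃ h₁
  refine h₁ (htwo _ ?_)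
  calc w a b + w a b = (w a b + w b c) - (w b c + w c a) + (w c a + w a b) := by abel
    _ = 0 := by rw [e₁, e₂, e₃]; abel

lemma eq_zero_of_out_arcs (hw : ZeroSumFree w) (hab : a ≠ b) (hac : a ≠ c) (hbc : b ≠ c)
    (hca : w c a = 0) (hcb : w c b = 0) : w a b = 0 := by
  have hbc' : w b c ≠ 0 := hw.swap_ne_zero hbc.symm hcb
  have hcycle : w a b + w b c ≠ 0 := by
    simpa [hca, add_comm] using hw.add_add_ne_zero hac.symm hbc.symm hab
  simpa using H.add_eq_arc hab hac hbc hbc hcycle hbc'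

lemma eq_zero_of_in_arcs (hw : ZeroSumFree w) (hab : a ≠ b) (hac : a ≠ c) (hbc : b ≠ c)
    (hac₀ : w a c = 0) (hbc₀ : w b c = 0) : w b a = 0 := by
  have hca : w c a ≠ 0 := hw.swap_ne_zero hac hac₀
  have hcb : w c b ≠ 0 := hw.swap_ne_zero hbc hbc₀
  have hcycle : w c b + w b a ≠ 0 := by
    simpa [hac₀] using hw.add_add_ne_zero hbc.symm hac.symm hab.symm
  have hpath := H.add_eq_arc hbc.symm hac.symm hab.symm hac.symm hcycle hca
  by_contra hba
  have harcs := H.arc_eq_arc hab.symm hac.symm hba hca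
  exact hcb (by rw [← harcs] at hpath; simpa using hpath)

lemma not_out_arcs_eq_zero (hw : ZeroSumFree w) (hab : a ≠ b) (hac : a ≠ c) (hbc : b ≠ c) :
    ¬(w c a = 0 ∧ w c b = 0) := fun ⟨hca, hcb⟩ =>
  hw.add_swap_ne_zero hab <| by
    rw [H.eq_zero_of_out_arcs hw hab hac hbc hca hcb,
      H.eq_zero_of_out_arcs hw hab.symm hbc hac hcb hca, add_zero]

lemma not_in_arcs_eq_zero (hw : ZeroSumFree w) (hab : a ≠ b) (hac : a ≠ c) (hbc : b ≠ c) :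
    ¬(w a c = 0 ∧ w b c = 0) := fun ⟨hac₀, hbc₀⟩ =>
  hw.add_swap_ne_zero hab <| by
    rw [H.eq_zero_of_in_arcs hw hab hac hbc hac₀ hbc₀,
      H.eq_zero_of_in_arcs hw hab.symm hbc hac hbc₀ hac₀, add_zero]

end NonzeroPathSumsAgree

theorem stmt4 (p : ℕ) (hp : p.Prime) (hp3 : 3 ≤ p)
    (w : Fin 3 → Fin 3 → ZMod p) (hzsf : ZeroSumFree w) :
    ∃ (v u₁ u₂ : Fin 3) (P₁ P₂ : List (Fin 3)),
      IsPath P₁ u₁ v ∧ IsPath P₂ u₂ v ∧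
      pathSum w P₁ ≠ 0 ∧ pathSum w P₂ ≠ 0 ∧ pathSum w P₁ ≠ pathSum w P₂ := by
  have := Fact.mk hp
  have htwo : ∀ x : ZMod p, x + x = 0 → x = 0 := by
    have h2 : (2 : ZMod p) ≠ 0 := Ring.two_ne_zero (by rw [ZMod.ringChar_zmod_n]; omega)
    intro x hx
    rw [← two_mul] at hx
    exact (mul_eq_zero.mp hx).resolve_left h2
  by_contra hbad
  have H : NonzeroPathSumsAgree w := fun v u₁ u₂ P₁ P₂ h₁ h₂ hs₁ hs₂ => by
    by_contra hne
    exact hbad ⟨v, u₁, u₂, P₁, P₂, h₁, h₂, hs₁, hs₂, hne⟩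
  -- Zero arcs taken from the two directed triangles are opposite, or share a tail or a head.
  rcases H.exists_eq_zero_of_triangle htwo (a := 0) (b := 1) (c := 2) (by decide) (by decide)
    (by decide) with h | h | h <;>
  rcases H.exists_eq_zero_of_triangle htwo (a := 0) (b := 2) (c := 1) (by decide) (by decide)
    (by decide) with h' | h' | h' <;>
  first
  | exact hzsf.swap_ne_zero (by decide) h h'
  | exact H.not_out_arcs_eq_zero hzsf (by decide) (by decide) (by decide) ⟨h, h'⟩
  | exact H.not_in_arcs_eq_zero hzsf (by decide) (by decide) (by decide) ⟨h, h'⟩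
end

section
/- Let A be a non-trivial finite abelian group of order |A|. Then every arc-labeling of the complete digraph on 8|A| vertices with values in A admits a directed cycle whose arc-labels sum to zero. -/
namespace ZS

/-- zip with the "snoc" of the tail. -/
lemma zip_snoc {α : Type*} (z : α) : ∀ (xs : List α) (x : α),
    (x::xs).zip (xs ++ [z]) = (x::xs).zip xs ++ [((x::xs).getLast (by simp), z)]
  | [], x => by simp
  | y :: ys, x => by
      have h := zip_snoc z ys y
      simp only [List.cons_append, List.zip_cons_cons] at h ⊢
      rw [h]
      simp [List.getLast_cons]

variable {n : ℕ} {A : Type*} [AddCommGroup A] (w : Fin n → Fin n → A)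

lemma cycleSum_eq_pathSum (x : Fin n) (xs : List (Fin n)) :
    cycleSum w (x::xs) = pathSum w (x::xs) + w ((x::xs).getLast (by simp)) x := by
  unfold cycleSum pathSum
  have hrot : (x::xs).rotate 1 = xs ++ [x] := by
    rw [List.rotate_cons_succ, List.rotate_zero]
  rw [hrot, zip_snoc, List.map_append, List.sum_append]
  simp

lemma pathSum_cons₂ (x y : Fin n) (t : List (Fin n)) :
    pathSum w (x::y::t) = w x y + pathSum w (y::t) := by
  unfold pathSum
  simp [List.zip_cons_cons]

@[simp] lemma pathSum_single (x : Fin n) : pathSum w [x] = 0 := by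
  unfold pathSum; simp

lemma pathSum_append [Inhabited (Fin n)] : ∀ (l₁ l₂ : List (Fin n)), l₁ ≠ [] → l₂ ≠ [] →
    pathSum w (l₁ ++ l₂) = pathSum w l₁ + w l₁.getLastI l₂.headI + pathSum w l₂
  | [], _, h, _ => absurd rfl h
  | [x], l₂, _, h₂ => by
      match l₂, h₂ with
      | y :: t, _ =>
        simp only [List.singleton_append, List.headI]
        rw [pathSum_cons₂]
        simp [List.getLastI_eq_getLast?]
  | x :: y :: t, l₂, _, h₂ => by
      have ih := pathSum_append (y :: t) l₂ (by simp) h₂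
      simp only [List.cons_append] at ih ⊢
      rw [pathSum_cons₂, pathSum_cons₂, ih]
      have hl : (x :: y :: t).getLastI = (y :: t).getLastI := by
        simp [List.getLastI_eq_getLast?, List.getLast?_cons_cons]
      rw [hl]
      abel



abbrev TRI (n : ℕ) := Fin n × Fin n × Fin n

variable {n : ℕ} {A : Type*} [AddCommGroup A]

def tau (w : Fin n → Fin n → A) (t : TRI n) : A :=
  w t.1 t.2.1 + w t.2.1 t.2.2 - w t.1 t.2.2

def tdist (t : TRI n) : Prop := t.1 ≠ t.2.1 ∧ t.1 ≠ t.2.2 ∧ t.2.1 ≠ t.2.2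

def vset (t : TRI n) : Finset (Fin n) := {t.1, t.2.1, t.2.2}

variable (sk : TRI n → Bool)

def seg (t : TRI n) : List (Fin n) :=
  if sk t then [t.1, t.2.2] else [t.1, t.2.1, t.2.2]

lemma seg_ne_nil (t : TRI n) : seg sk t ≠ [] := by
  unfold seg; split <;> simp

lemma seg_headI [Inhabited (Fin n)] (t : TRI n) : (seg sk t).headI = t.1 := by
  unfold seg; split <;> rfl

lemma seg_getLastI [Inhabited (Fin n)] (t : TRI n) : (seg sk t).getLastI = t.2.2 := by
  unfold seg; split <;> simp [List.getLastI_eq_getLast?]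

lemma seg_mem {t : TRI n} {x : Fin n} (h : x ∈ seg sk t) : x ∈ vset t := by
  unfold seg at h; unfold vset
  by_cases hs : sk t
  · rw [if_pos hs] at h
    simp only [List.mem_cons, List.not_mem_nil, or_false] at h
    rcases h with h | h <;> simp [h]
  · rw [if_neg hs] at h
    simp only [List.mem_cons, List.not_mem_nil, or_false] at h
    rcases h with h | h | h <;> simp [h]

lemma seg_nodup {t : TRI n} (h : tdist t) : (seg sk t).Nodup := by
  obtain ⟨h1, h2, h3⟩ := h
  unfold seg; split <;> simp [h1, h2, h3]

lemma seg_length (t : TRI n) : 2 ≤ (seg sk t).length := by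
  unfold seg; split <;> simp

lemma seg_pathSum (w : Fin n → Fin n → A) (t : TRI n) :
    pathSum w (seg sk t) = w t.1 t.2.2 + (if sk t then 0 else tau w t) := by
  unfold seg
  by_cases h : sk t
  · simp [h, pathSum]
  · simp [h, pathSum, tau]

def chain (L : List (TRI n)) : List (Fin n) := L.flatMap (seg sk)

lemma chain_cons (t : TRI n) (L : List (TRI n)) :
    chain sk (t :: L) = seg sk t ++ chain sk L := by
  unfold chain; simp [List.flatMap_cons]

lemma chain_ne_nil (t : TRI n) (L : List (TRI n)) : chain sk (t :: L) ≠ [] := by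
  rw [chain_cons]
  simp [seg_ne_nil]

lemma chain_headI [Inhabited (Fin n)] (t : TRI n) (L : List (TRI n)) :
    (chain sk (t :: L)).headI = t.1 := by
  rw [chain_cons]
  rw [← seg_headI sk t]
  match h : seg sk t, seg_ne_nil sk t with
  | x :: s, _ => simp

lemma chain_getLastI [Inhabited (Fin n)] : ∀ (L : List (TRI n)) (t : TRI n),
    (chain sk (t :: L)).getLastI = ((t :: L).getLast (by simp)).2.2
  | [], t => by
      rw [chain_cons]
      simp [chain, seg_getLastI]
  | s :: L', t => by
      have ih := chain_getLastI (L := L') s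
      rw [chain_cons]
      have hne : chain sk (s :: L') ≠ [] := chain_ne_nil sk s L'
      rw [List.getLastI_eq_getLast?, List.getLast?_append_of_ne_nil _ hne,
          ← List.getLastI_eq_getLast?, ih]
      simp [List.getLast_cons]

lemma chain_mem : ∀ {L : List (TRI n)} {x : Fin n}, x ∈ chain sk L → ∃ t ∈ L, x ∈ vset t := by
  intro L x h
  unfold chain at h
  rw [List.mem_flatMap] at h
  obtain ⟨t, ht, hx⟩ := h
  exact ⟨t, ht, seg_mem sk hx⟩

lemma chain_nodup : ∀ {L : List (TRI n)}, (∀ t ∈ L, tdist t) →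
    L.Pairwise (fun s t => Disjoint (vset s) (vset t)) → (chain sk L).Nodup
  | [], _, _ => by simp [chain]
  | t :: L', hd, hp => by
      rw [chain_cons, List.nodup_append]
      rw [List.pairwise_cons] at hp
      refine ⟨seg_nodup sk (hd t (by simp)), chain_nodup (fun s hs => hd s (by simp [hs])) hp.2, ?_⟩
      intro x hx y hx' hxy; subst hxy
      obtain ⟨s, hs, hxs⟩ := chain_mem sk hx'
      have := hp.1 s hs
      exact (Finset.disjoint_left.mp this) (seg_mem sk hx) hxs

lemma chain_length (t : TRI n) (L : List (TRI n)) : 2 ≤ (chain sk (t :: L)).length := by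
  rw [chain_cons, List.length_append]
  have := seg_length sk t
  omega

lemma chain_pathSum [Inhabited (Fin n)] (w : Fin n → Fin n → A) :
    ∀ (L : List (TRI n)) (t : TRI n),
    pathSum w (chain sk (t :: L)) = ((t::L).map (fun s => pathSum w (seg sk s))).sum
      + (((t::L).zip L).map (fun p => w p.1.2.2 p.2.1)).sum
  | [], t => by simp [chain_cons, chain]
  | s :: L', t => by
      have ih := chain_pathSum w L' s
      rw [chain_cons,
        pathSum_append w (seg sk t) (chain sk (s :: L')) (seg_ne_nil sk t) (chain_ne_nil sk s L'),
        ih, seg_getLastI, chain_headI]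
      simp only [List.map_cons, List.sum_cons, List.zip_cons_cons]
      abel

lemma sum_map_add {α : Type*} (l : List α) (f g : α → A) :
    (l.map (fun x => f x + g x)).sum = (l.map f).sum + (l.map g).sum := by
  induction l with
  | nil => simp
  | cons a t ih => simp [ih]; abel

lemma cycleSum_eq' [Inhabited (Fin n)] (w : Fin n → Fin n → A) (l : List (Fin n)) (h : l ≠ []) :
    cycleSum w l = pathSum w l + w l.getLastI l.headI := by
  match l, h with
  | x :: xs, _ =>
    rw [cycleSum_eq_pathSum]
    congr 1
    rw [List.getLastI_eq_getLast?, List.getLast?_eq_getLast (by simp : (x::xs) ≠ [])]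
    rfl

lemma cycleSum_chain [Inhabited (Fin n)] (w : Fin n → Fin n → A) (t : TRI n) (L : List (TRI n)) :
    cycleSum w (chain sk (t :: L)) =
      ((((t::L).map (fun s => w s.1 s.2.2)).sum
        + (((t::L).zip L).map (fun p => w p.1.2.2 p.2.1)).sum)
        + w ((t::L).getLast (by simp)).2.2 t.1)
      + ((t::L).map (fun s => if sk s then 0 else tau w s)).sum := by
  rw [cycleSum_eq' w _ (chain_ne_nil sk t L), chain_pathSum, chain_headI, chain_getLastI]
  have hsplit : ((t::L).map (fun s => pathSum w (seg sk s))).sum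
      = ((t::L).map (fun s => w s.1 s.2.2)).sum
        + ((t::L).map (fun s => if sk s then 0 else tau w s)).sum := by
    rw [← sum_map_add]
    have hfun : (fun s => pathSum w (seg sk s))
        = fun s : TRI n => w s.1 s.2.2 + (if sk s then 0 else tau w s) :=
      funext (seg_pathSum sk w)
    rw [hfun]
  rw [hsplit]
  abel

section SubsetSums

variable [DecidableEq A] (w : Fin n → Fin n → A)

def TT (F : Finset (TRI n)) : Finset A := F.powerset.image (fun S => ∑ t ∈ S, tau w t)

lemma zero_mem_TT (F : Finset (TRI n)) : 0 ∈ TT w F := by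
  unfold TT
  rw [Finset.mem_image]
  exact ⟨∅, by simp, by simp⟩

lemma TT_insert {t₀ : TRI n} {F : Finset (TRI n)} (h : t₀ ∉ F) :
    TT w (insert t₀ F) = TT w F ∪ (TT w F).image (· + tau w t₀) := by
  unfold TT
  rw [Finset.powerset_insert, Finset.image_union]
  congr 1
  rw [Finset.image_image]
  ext a
  constructor
  · intro ha
    rw [Finset.mem_image] at ha
    obtain ⟨S, hS, rfl⟩ := ha
    rw [Finset.mem_powerset] at hS
    have ht₀S : t₀ ∉ S := fun hc => h (hS hc)
    rw [Finset.mem_image]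
    refine ⟨∑ t ∈ S, tau w t, Finset.mem_image_of_mem _ (Finset.mem_powerset.mpr hS), ?_⟩
    simp only [Function.comp_apply]
    rw [Finset.sum_insert ht₀S]
    abel
  · intro ha
    rw [Finset.mem_image] at ha
    obtain ⟨b, hb, rfl⟩ := ha
    rw [Finset.mem_image] at hb
    obtain ⟨S, hS, rfl⟩ := hb
    rw [Finset.mem_powerset] at hS
    have ht₀S : t₀ ∉ S := fun hc => h (hS hc)
    refine Finset.mem_image.mpr ⟨S, Finset.mem_powerset.mpr hS, ?_⟩
    simp only [Function.comp_apply]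
    rw [Finset.sum_insert ht₀S]
    abel

def stab (T : Finset A) : AddSubgroup A where
  carrier := {h | T.image (· + h) = T}
  zero_mem' := by
    show T.image (· + 0) = T
    simp only [add_zero]
    exact Finset.image_id'
  add_mem' := by
    intro a b ha hb
    have : T.image (· + (a + b)) = (T.image (· + a)).image (· + b) := by
      rw [Finset.image_image]
      congr 1
      funext x
      simp [add_assoc]
    simp only [Set.mem_setOf_eq] at *
    rw [this, ha, hb]
  neg_mem' := by
    intro a ha
    simp only [Set.mem_setOf_eq] at *
    calc T.image (· + -a) = (T.image (· + a)).image (· + -a) := by rw [ha]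
      _ = T.image ((· + -a) ∘ (· + a)) := Finset.image_image
      _ = T := by
          have hfun : (((· + -a) ∘ (· + a)) : A → A) = fun x => x := by
            funext x; simp
          rw [hfun]
          exact Finset.image_id'

lemma mem_stab {T : Finset A} {h : A} : h ∈ stab T ↔ T.image (· + h) = T := Iff.rfl

lemma TT_grow {t₀ : TRI n} {F : Finset (TRI n)} (hF : t₀ ∉ F)
    (h : tau w t₀ ∉ stab (TT w F)) : (TT w F).card < (TT w (insert t₀ F)).card := by
  rw [TT_insert w hF]
  set T := TT w F with hT
  have hnsub : ¬ (T.image (· + tau w t₀) ⊆ T) := by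
    intro hsub
    apply h
    rw [mem_stab]
    apply Finset.eq_of_subset_of_card_le hsub
    rw [Finset.card_image_of_injective _ (add_left_injective _)]
  obtain ⟨x, hx, hxT⟩ := Finset.not_subset.mp hnsub
  have hins : insert x T ⊆ T ∪ T.image (· + tau w t₀) := by
    intro y hy
    rw [Finset.mem_insert] at hy
    rcases hy with rfl | hy
    · exact Finset.mem_union_right _ hx
    · exact Finset.mem_union_left _ hy
  calc T.card < (insert x T).card := by rw [Finset.card_insert_of_notMem hxT]; omega
    _ ≤ _ := Finset.card_le_card hins

lemma stab_top {T : Finset A} (hT : T.Nonempty) (h : ∀ a : A, a ∈ stab T) [Fintype A] :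
    T = Finset.univ := by
  obtain ⟨t₀, ht₀⟩ := hT
  ext a
  simp only [Finset.mem_univ, iff_true]
  have := h (a - t₀)
  rw [mem_stab] at this
  rw [← this, Finset.mem_image]
  exact ⟨t₀, ht₀, by abel⟩

end SubsetSums

lemma list_pairwise_of_forall {α : Type*} {R : α → α → Prop} : ∀ {l : List α}, l.Nodup →
    (∀ a ∈ l, ∀ b ∈ l, a ≠ b → R a b) → l.Pairwise R
  | [], _, _ => List.Pairwise.nil
  | a :: t, h, hs => by
      rw [List.nodup_cons] at h
      exact List.Pairwise.cons
        (fun b hb => hs a (by simp) b (by simp [hb]) (fun e => h.1 (e ▸ hb)))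
        (list_pairwise_of_forall h.2 (fun x hx y hy hxy => hs x (by simp [hx]) y (by simp [hy]) hxy))

lemma sum_map_sub {α : Type*} (l : List α) (f g : α → A) :
    (l.map (fun x => f x - g x)).sum = (l.map f).sum - (l.map g).sum := by
  induction l with
  | nil => simp
  | cons a t ih => simp [ih]; abel

lemma zip_tail_ne {α : Type*} : ∀ {l : List α}, l.Nodup → ∀ p ∈ l.zip l.tail, p.1 ≠ p.2
  | [], _, p, hp => by simp at hp
  | [x], _, p, hp => by simp at hp
  | x :: y :: t, hnd, p, hp => by
      simp only [List.tail_cons, List.zip_cons_cons, List.mem_cons] at hp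
      rcases hp with rfl | hp
      · intro hc
        simp only at hc
        exact (List.nodup_cons.mp hnd).1 (hc ▸ (by simp : y ∈ y :: t))
      · exact zip_tail_ne (List.nodup_cons.mp hnd).2 p hp

lemma zip_rotate_ne {α : Type*} : ∀ {l : List α}, l.Nodup → 2 ≤ l.length →
    ∀ p ∈ l.zip (l.rotate 1), p.1 ≠ p.2 := by
  intro l hnd hlen p hp
  match l, hnd, hlen, hp with
  | x :: xs, hnd, hlen, hp =>
    have hxs : xs ≠ [] := by
      intro hc; subst hc; simp at hlen
    have hrot : (x::xs).rotate 1 = xs ++ [x] := by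
      rw [List.rotate_cons_succ, List.rotate_zero]
    rw [hrot, zip_snoc, List.mem_append] at hp
    rcases hp with hp | hp
    · exact zip_tail_ne hnd p hp
    · simp only [List.mem_singleton] at hp
      subst hp
      simp only
      intro hc
      have h1 : (x :: xs).getLast (by simp) = xs.getLast hxs := List.getLast_cons hxs
      have h2 : xs.getLast hxs ∈ xs := List.getLast_mem hxs
      rw [h1] at hc
      exact (List.nodup_cons.mp hnd).1 (hc ▸ h2)

lemma cycleSum_map_emb {k : ℕ} (emb : Fin k → Fin n)
    (w : Fin n → Fin n → A) (G : Fin n → A) (l : List (Fin k)) (hnd : l.Nodup) (hlen : 2 ≤ l.length)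
    (v : Fin k → Fin k → A)
    (hv : ∀ i j, i ≠ j → v i j = w (emb i) (emb j) + (G (emb i) - G (emb j))) :
    cycleSum v l = cycleSum w (l.map emb) := by
  have hzip : ∀ p ∈ l.zip (l.rotate 1), v p.1 p.2
      = w (emb p.1) (emb p.2) + (G (emb p.1) - G (emb p.2)) := by
    intro p hp
    exact hv p.1 p.2 (zip_rotate_ne hnd hlen p hp)
  unfold cycleSum
  rw [List.map_congr_left hzip]
  have hmm1 : (l.map emb).zip ((l.map emb).rotate 1)
      = (l.zip (l.rotate 1)).map (Prod.map emb emb) := by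
    rw [← List.map_rotate, List.zip_map]
  rw [hmm1, List.map_map]
  have hsplit := sum_map_add (l.zip (l.rotate 1))
    (fun p => w (emb p.1) (emb p.2)) (fun p => G (emb p.1) - G (emb p.2))
  rw [hsplit]
  have htel : ((l.zip (l.rotate 1)).map (fun p => G (emb p.1) - G (emb p.2))).sum = 0 := by
    rw [sum_map_sub]
    have hfst : (l.zip (l.rotate 1)).map (fun p => G (emb p.1))
        = l.map (fun i => G (emb i)) := by
      have : (l.zip (l.rotate 1)).map (fun p => G (emb p.1))
          = ((l.zip (l.rotate 1)).map Prod.fst).map (fun i => G (emb i)) := by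
        rw [List.map_map]; rfl
      rw [this, List.map_fst_zip (by rw [List.length_rotate])]
    have hsnd : (l.zip (l.rotate 1)).map (fun p => G (emb p.2))
        = (l.rotate 1).map (fun i => G (emb i)) := by
      have : (l.zip (l.rotate 1)).map (fun p => G (emb p.2))
          = ((l.zip (l.rotate 1)).map Prod.snd).map (fun i => G (emb i)) := by
        rw [List.map_map]; rfl
      rw [this, List.map_snd_zip (by rw [List.length_rotate])]
    rw [hfst, hsnd]
    have hperm : ((l.rotate 1).map (fun i => G (emb i))).Perm (l.map (fun i => G (emb i))) :=
      (List.rotate_perm l 1).map _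
    rw [hperm.sum_eq]
    abel
  rw [htel, add_zero]
  rfl

universe u

theorem master : ∀ (m : ℕ) (B : Type u) [AddCommGroup B] [Fintype B],
    Fintype.card B = m → ∀ (n : ℕ), 8 * m ≤ n →
    ∀ w : Fin n → Fin n → B, ∃ l : List (Fin n), IsCycle l ∧ cycleSum w l = 0 := by
  intro m
  induction m using Nat.strong_induction_on with
  | _ m IH =>
    intro B instG instF hcard n hn w
    classical
    haveI : Nonempty B := ⟨0⟩
    have hpos : 0 < m := hcard ▸ Fintype.card_pos
    by_cases hm1 : m = 1
    · -- trivial group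
      subst hm1
      haveI : Subsingleton B := by
        have h1 : Fintype.card B ≤ 1 := by omega
        exact Fintype.card_le_one_iff_subsingleton.mp h1
      have h2n : 2 ≤ n := by omega
      refine ⟨[⟨0, by omega⟩, ⟨1, by omega⟩], ⟨?_, by simp⟩, Subsingleton.elim _ 0⟩
      refine List.nodup_cons.mpr ⟨?_, List.nodup_singleton _⟩
      simp only [List.mem_singleton]
      intro hc
      have hc' := congrArg Fin.val hc
      simp at hc'
    have hm2 : 2 ≤ m := by omega
    haveI : Inhabited (Fin n) := ⟨⟨0, by omega⟩⟩
    -- valid families of disjoint triples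
    set valid : Finset (TRI n) → Prop := fun F =>
      (∀ t ∈ F, tdist t) ∧ (F : Set (TRI n)).Pairwise (fun s t => Disjoint (vset s) (vset t))
        ∧ F.card < (TT w F).card with hvaliddef
    have hTTempty : TT w (∅ : Finset (TRI n)) = {0} := by
      unfold TT
      simp
    have hvempty : valid ∅ := by
      simp only [hvaliddef]
      refine ⟨by simp, by simp, ?_⟩
      rw [hTTempty]
      simp
    obtain ⟨F, hFV, hFmax⟩ :=
      Finset.exists_max_image ((Finset.univ : Finset (Finset (TRI n))).filter valid)
        (fun F => (TT w F).card) ⟨∅, Finset.mem_filter.mpr ⟨Finset.mem_univ _, hvempty⟩⟩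
    rw [Finset.mem_filter] at hFV
    have hvalid : valid F := hFV.2
    rw [hvaliddef] at hvalid
    obtain ⟨hvd, hvp, hvc⟩ := hvalid
    by_cases hTT : TT w F = Finset.univ
    · -- FINISH: subset sums cover everything; build the chain cycle
      have hFne : F ≠ ∅ := by
        intro hc
        rw [hc, hTTempty] at hTT
        have hcongr := congrArg Finset.card hTT
        rw [Finset.card_singleton, Finset.card_univ, hcard] at hcongr
        omega
      obtain ⟨t, L, hLT⟩ : ∃ t L, F.toList = t :: L := by
        match h : F.toList with
        | [] => exact absurd (Finset.toList_eq_nil.mp h) hFne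
        | t :: L => exact ⟨t, L, rfl⟩
      have hmemLT : ∀ s, s ∈ t :: L ↔ s ∈ F := by
        intro s; rw [← hLT, Finset.mem_toList]
      set CONST : B := ((((t::L).map (fun s => w s.1 s.2.2)).sum
          + (((t::L).zip L).map (fun p => w p.1.2.2 p.2.1)).sum)
          + w ((t::L).getLast (by simp)).2.2 t.1) with hCONST
      have hmemC : -CONST ∈ TT w F := hTT ▸ Finset.mem_univ _
      obtain ⟨S, hS, hSsum⟩ := Finset.mem_image.mp hmemC
      rw [Finset.mem_powerset] at hS
      set sk : TRI n → Bool := fun s => if s ∈ S then false else true with hsk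
      refine ⟨chain sk (t :: L), ⟨?_, ?_⟩, ?_⟩
      · apply chain_nodup
        · intro s hs; exact hvd s ((hmemLT s).mp hs)
        · apply list_pairwise_of_forall
          · rw [← hLT]; exact F.nodup_toList
          · intro a ha b hb hab
            exact hvp (Finset.mem_coe.mpr ((hmemLT a).mp ha))
              (Finset.mem_coe.mpr ((hmemLT b).mp hb)) hab
      · exact chain_length sk t L
      · rw [cycleSum_chain]
        have hite : ((t::L).map (fun s => if sk s then 0 else tau w s)).sum
            = ∑ s ∈ S, tau w s := by
          have h1 : ((t::L).map (fun s => if sk s then 0 else tau w s)).sum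
              = ((t::L).map (fun s => if s ∈ S then tau w s else 0)).sum := by
            congr 1
            apply List.map_congr_left
            intro s _
            by_cases hsS : s ∈ S <;> simp [hsk, hsS]
          rw [h1, ← hLT, Finset.sum_map_toList, Finset.sum_ite_mem,
            Finset.inter_eq_right.mpr hS]
        rw [hite, hSsum, ← hCONST]
        abel
    · -- STUCK: stabilizer is a proper subgroup, recurse
      set T := TT w F with hTdef
      set H := stab T with hHdef
      haveI : Fintype H := Fintype.ofFinite H
      have hHne : H ≠ ⊤ := by
        intro htop
        apply hTT
        rw [hTdef]
        apply stab_top ⟨0, zero_mem_TT w F⟩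
        intro a
        have : a ∈ (⊤ : AddSubgroup B) := AddSubgroup.mem_top a
        rw [← htop, hHdef, hTdef] at this
        exact this
      have hHpos : 0 < Fintype.card H := @Fintype.card_pos _ _ ⟨(0 : H)⟩
      have hcardH2 : 2 * Fintype.card H ≤ m := by
        have hdvd := AddSubgroup.card_addSubgroup_dvd_card H
        rw [Nat.card_eq_fintype_card, Nat.card_eq_fintype_card, hcard] at hdvd
        have hne2 : Fintype.card H ≠ m := by
          intro he
          apply hHne
          apply AddSubgroup.eq_top_of_card_eq
          rw [Nat.card_eq_fintype_card, Nat.card_eq_fintype_card, hcard, he]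
        obtain ⟨c, hc⟩ := hdvd
        match c, hc with
        | 0, hc => omega
        | 1, hc => omega
        | (c+2), hc =>
          have h2 : Fintype.card H * 2 ≤ Fintype.card H * (c+2) :=
            Nat.mul_le_mul_left _ (by omega)
          omega
      set used := F.biUnion vset with husedDef
      set W := (Finset.univ : Finset (Fin n)) \ used with hWdef
      have husedcard : used.card ≤ 3 * F.card := by
        calc used.card ≤ ∑ t ∈ F, (vset t).card := Finset.card_biUnion_le
          _ ≤ ∑ _t ∈ F, 3 := Finset.sum_le_sum (fun t _ => by
              apply le_trans (Finset.card_insert_le _ _)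
              apply Nat.succ_le_succ
              apply le_trans (Finset.card_insert_le _ _)
              simp)
          _ = 3 * F.card := by rw [Finset.sum_const, smul_eq_mul, mul_comm]
      have hTcard : T.card ≤ m - 1 := by
        have h1 : T.card < m := by
          have h2 := Finset.card_lt_card (Finset.ssubset_iff_subset_ne.mpr
            ⟨Finset.subset_univ _, fun hc => hTT (hTdef ▸ hc)⟩)
          rw [Finset.card_univ, hcard] at h2
          exact h2
        omega
      have hFcard : F.card ≤ m - 2 := by omega
      have hWcard : W.card = n - used.card := by
        rw [hWdef, Finset.card_sdiff_of_subset (Finset.subset_univ _), Finset.card_univ, Fintype.card_fin]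
      have hWbig : 8 * Fintype.card H ≤ W.card := by omega
      have hWnotused : ∀ a, a ∈ W → a ∉ used := by
        intro a ha
        rw [hWdef, Finset.mem_sdiff] at ha
        exact ha.2
      have hstuck : ∀ x y z : Fin n, x ∈ W → y ∈ W → z ∈ W → x ≠ y → x ≠ z → y ≠ z →
          tau w (x,y,z) ∈ H := by
        intro x y z hx hy hz hxy hxz hyz
        by_contra htau
        set t₀ : TRI n := (x,y,z) with ht₀
        have hdisj : ∀ s ∈ F, Disjoint (vset t₀) (vset s) := by
          intro s hs
          rw [Finset.disjoint_left]
          intro a hat₀ has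
          have haW : a ∈ W := by
            simp only [ht₀, vset, Finset.mem_insert, Finset.mem_singleton] at hat₀
            rcases hat₀ with rfl|rfl|rfl <;> assumption
          exact hWnotused a haW (Finset.mem_biUnion.mpr ⟨s, hs, has⟩)
        have ht₀F : t₀ ∉ F := by
          intro hc
          have hxused : x ∈ used := Finset.mem_biUnion.mpr
            ⟨t₀, hc, by simp [vset, ht₀]⟩
          exact hWnotused x hx hxused
        have hgrow := TT_grow w ht₀F htau
        have hvalid' : valid (insert t₀ F) := by
          rw [hvaliddef]
          refine ⟨?_, ?_, ?_⟩
          · intro s hs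
            rcases Finset.mem_insert.mp hs with rfl | hs
            · exact ⟨hxy, hxz, hyz⟩
            · exact hvd s hs
          · rw [Finset.coe_insert]
            apply hvp.insert_of_symmetric
            · intro a b hab
              exact hdisj a b
          · rw [Finset.card_insert_of_notMem ht₀F]
            rw [← hTdef] at hgrow
            omega
        have hle := hFmax _ (Finset.mem_filter.mpr ⟨Finset.mem_univ _, hvalid'⟩)
        rw [← hTdef] at hgrow
        omega
      have hWne : W.Nonempty := Finset.card_pos.mp (by omega)
      obtain ⟨o, ho⟩ := hWne
      set Fn : Fin n → B := fun x => if x = o then 0 else w o x with hFn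
      have hmem : ∀ x y, x ∈ W → y ∈ W → x ≠ y → w x y + (Fn x - Fn y) ∈ H := by
        intro x y hx hy hxy
        by_cases hxo : x = o
        · have hyo : ¬ (y = o) := fun hc => hxy (hxo.trans hc.symm)
          simp only [hFn, if_pos hxo, if_neg hyo]
          rw [hxo]
          have heq : w o y + ((0:B) - w o y) = 0 := by abel
          rw [heq]
          exact H.zero_mem
        · by_cases hyo : y = o
          · obtain ⟨z, hzmem⟩ : ∃ z, z ∈ (W.erase x).erase o := by
              apply Finset.card_pos.mp
              have h1 : W.card - 1 ≤ (W.erase x).card := Finset.pred_card_le_card_erase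
              have h2 : (W.erase x).card - 1 ≤ ((W.erase x).erase o).card :=
                Finset.pred_card_le_card_erase
              omega
            rw [Finset.mem_erase, Finset.mem_erase] at hzmem
            obtain ⟨hzo, hzx, hzW⟩ := hzmem
            have h1 := hstuck x o z hx ho hzW hxo (fun hc => hzx hc.symm) (fun hc => hzo hc.symm)
            have h2 := hstuck o x z ho hx hzW (fun hc => hxo hc.symm) (fun hc => hzo hc.symm)
              (fun hc => hzx hc.symm)
            have hsum := H.add_mem h1 h2
            have heq : tau w (x,o,z) + tau w (o,x,z) = w x o + w o x := by
              unfold tau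
              simp only
              abel
            rw [heq] at hsum
            simp only [hFn, if_neg hxo, if_pos hyo]
            rw [hyo]
            have heq2 : w x o + (w o x - (0:B)) = w x o + w o x := by abel
            rw [heq2]
            exact hsum
          · have h1 := hstuck o x y ho hx hy (fun hc => hxo hc.symm) (fun hc => hyo hc.symm) hxy
            have heq : tau w (o,x,y) = w x y + (w o x - w o y) := by
              unfold tau
              simp only
              abel
            simp only [hFn, if_neg hxo, if_neg hyo]
            rw [← heq]
            exact h1
      set k := 8 * Fintype.card H with hk
      have hkW : k ≤ W.card := hWbig
      set emb : Fin k → Fin n := fun i => W.orderEmbOfFin rfl (Fin.castLE hkW i) with hembDef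
      have hembInj : Function.Injective emb := by
        intro i j hij
        simp only [hembDef] at hij
        have h1 := (W.orderEmbOfFin rfl).injective hij
        exact Fin.castLE_injective hkW h1
      have hembW : ∀ i, emb i ∈ W := by
        intro i
        simp only [hembDef]
        exact Finset.orderEmbOfFin_mem _ _ _
      set w' : Fin k → Fin k → H := fun i j =>
        if h : emb i ≠ emb j
        then ⟨w (emb i) (emb j) + (Fn (emb i) - Fn (emb j)),
              hmem _ _ (hembW i) (hembW j) h⟩
        else 0 with hw'
      have hcardHlt : Fintype.card H < m := by omega
      obtain ⟨l', hl'c, hl's⟩ := IH (Fintype.card H) hcardHlt H rfl k (le_of_eq hk.symm) w'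
      have hv : ∀ i j : Fin k, i ≠ j →
          ((w' i j : B)) = w (emb i) (emb j) + (Fn (emb i) - Fn (emb j)) := by
        intro i j hij
        have hne : emb i ≠ emb j := fun hc => hij (hembInj hc)
        simp only [hw', dif_pos hne]
      have htrans := cycleSum_map_emb emb w Fn l' hl'c.1 hl'c.2
        (fun i j => ((w' i j : B))) hv
      have hz : cycleSum (fun i j => ((w' i j : B))) l' = 0 := by
        have hcoe : (H.subtype) (cycleSum w' l') = cycleSum (fun i j => ((w' i j : B))) l' := by
          unfold cycleSum
          rw [map_list_sum, List.map_map]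
          rfl
        rw [hl's, map_zero] at hcoe
        exact hcoe.symm
      refine ⟨l'.map emb, ⟨hl'c.1.map hembInj, by simpa using hl'c.2⟩, ?_⟩
      rw [← htrans, hz]

end ZS

theorem stmt6 {A : Type*} [AddCommGroup A] [Fintype A] [Nontrivial A]
    (w : Fin (8 * Fintype.card A) → Fin (8 * Fintype.card A) → A) :
    ∃ l : List (Fin (8 * Fintype.card A)), IsCycle l ∧ cycleSum w l = 0 := ZS.master (Fintype.card A) A rfl (8 * Fintype.card A) (le_refl _) w
end

section
/- For every prime p ≥ 3, every arc-labeling of the complete digraph on ⌈(3p-1)/2⌉ vertices with values in ZMod p admits a directed cycle whose arc-labels sum to zero. -/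
namespace ZscAux

variable {n : ℕ} {p : ℕ}

/-! ### List sum lemmas -/

lemma pathSum_cons_cons {A : Type*} [AddCommMonoid A] (w : Fin n → Fin n → A)
    (a b : Fin n) (l : List (Fin n)) :
    pathSum w (a :: b :: l) = w a b + pathSum w (b :: l) := by
  simp [pathSum, List.zip_cons_cons]

lemma pathSum_concat {A : Type*} [AddCommMonoid A] (w : Fin n → Fin n → A) :
    ∀ (l : List (Fin n)) (e b : Fin n), l.getLast? = some e →
      pathSum w (l ++ [b]) = pathSum w l + w e b := by
  intro l
  induction l with
  | nil => intro e b h; simp at h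
  | cons a l ih =>
    intro e b h
    cases l with
    | nil =>
      simp only [List.getLast?_singleton, Option.some_inj] at h
      subst h
      simp [pathSum, List.zip_cons_cons]
    | cons c l' =>
      rw [List.getLast?_cons_cons] at h
      have ih' := ih e b h
      simp only [List.cons_append] at ih' ⊢
      rw [pathSum_cons_cons, ih', pathSum_cons_cons, add_assoc]

lemma zipsum_aux {A : Type*} [AddCommGroup A] (w : Fin n → Fin n → A) (u : Fin n) :
    ∀ (l : List (Fin n)) (e : Fin n), l.getLast? = some e →
      ((l.zip (l.tail ++ [u])).map fun q => w q.1 q.2).sum = pathSum w l + w e u := by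
  intro l
  induction l with
  | nil => intro e h; simp at h
  | cons a l ih =>
    intro e h
    cases l with
    | nil =>
      simp only [List.getLast?_singleton, Option.some_inj] at h
      subst h
      simp [pathSum]
    | cons c l' =>
      rw [List.getLast?_cons_cons] at h
      have h1 : (a :: c :: l').tail ++ [u] = c :: (l' ++ [u]) := by simp
      rw [h1, List.zip_cons_cons, List.map_cons, List.sum_cons]
      have h2 : (c :: l').tail ++ [u] = l' ++ [u] := by simp
      have := ih e h
      rw [h2] at this
      rw [this, pathSum_cons_cons, add_assoc]

lemma cycleSum_cons_eq {A : Type*} [AddCommGroup A] (w : Fin n → Fin n → A)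
    (u a e : Fin n) (l : List (Fin n)) (h : (a :: l).getLast? = some e) :
    cycleSum w (u :: a :: l) = w u a + pathSum w (a :: l) + w e u := by
  unfold cycleSum
  have hrot : (u :: a :: l).rotate 1 = (a :: l) ++ [u] := by
    rw [List.rotate_cons_succ, List.rotate_zero]
  rw [hrot]
  have hshape : (a :: l) ++ [u] = a :: (l ++ [u]) := by simp
  rw [hshape, List.zip_cons_cons, List.map_cons, List.sum_cons]
  have h2 : (a :: l).tail ++ [u] = l ++ [u] := by simp
  have := zipsum_aux w u (a :: l) e h
  rw [h2] at this
  rw [this, add_assoc]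

lemma cycleSum_pair {A : Type*} [AddCommGroup A] (w : Fin n → Fin n → A) (u v : Fin n) :
    cycleSum w [u, v] = w u v + w v u := by
  have := cycleSum_cons_eq w u v v [] (by simp)
  simpa [pathSum] using this

lemma cycleSum_append {A : Type*} [AddCommGroup A] (w : Fin n → Fin n → A)
    (u b e : Fin n) (l : List (Fin n)) (h : l.getLast? = some e) :
    cycleSum w (u :: (l ++ [b])) = cycleSum w (u :: l) + (w e b + w b u - w e u) := by
  obtain ⟨a, l', rfl⟩ : ∃ a l', l = a :: l' := by
    cases l with
    | nil => simp at h
    | cons a l' => exact ⟨a, l', rfl⟩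
  have h1 := cycleSum_cons_eq w u a e l' h
  have hcc : (a :: l') ++ [b] = a :: (l' ++ [b]) := by simp
  have h2 : (a :: (l' ++ [b])).getLast? = some b := by
    rw [← hcc]; exact List.getLast?_concat
  have h3 := cycleSum_cons_eq w u a b (l' ++ [b]) h2
  have h4 : pathSum w (a :: (l' ++ [b])) = pathSum w (a :: l') + w e b := by
    rw [← hcc]; exact pathSum_concat w (a :: l') e b h
  simp only [List.cons_append] at h3 ⊢
  rw [h3, h4, h1]
  abel

/-! ### The descending list for τ-cycles -/

def descList (g : ℕ → Fin n) : ℕ → List (Fin n)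
  | 0 => []
  | (m+1) => g m :: descList g m

lemma descList_length (g : ℕ → Fin n) (m : ℕ) : (descList g m).length = m := by
  induction m with
  | zero => rfl
  | succ m ih => simp [descList, ih]

lemma mem_descList (g : ℕ → Fin n) (m : ℕ) (x : Fin n) :
    x ∈ descList g m ↔ ∃ l, l < m ∧ x = g l := by
  induction m with
  | zero => simp [descList]
  | succ m ih =>
    simp only [descList, List.mem_cons, ih]
    constructor
    · rintro (rfl | ⟨l, hl, rfl⟩)
      · exact ⟨m, Nat.lt_succ_self m, rfl⟩
      · exact ⟨l, Nat.lt_succ_of_lt hl, rfl⟩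
    · rintro ⟨l, hl, rfl⟩
      rcases Nat.lt_succ_iff_lt_or_eq.mp hl with h | rfl
      · exact Or.inr ⟨l, h, rfl⟩
      · exact Or.inl rfl

lemma descList_nodup (g : ℕ → Fin n) (m : ℕ)
    (hinj : ∀ a b, a < m → b < m → g a = g b → a = b) :
    (descList g m).Nodup := by
  induction m with
  | zero => simp [descList]
  | succ m ih =>
    simp only [descList, List.nodup_cons]
    constructor
    · intro hmem
      obtain ⟨l, hl, hgl⟩ := (mem_descList g m (g m)).mp hmem
      have := hinj m l (Nat.lt_succ_self m) (Nat.lt_succ_of_lt hl) hgl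
      omega
    · exact ih (fun a b ha hb h => hinj a b (Nat.lt_succ_of_lt ha) (Nat.lt_succ_of_lt hb) h)

lemma descList_getLast? (g : ℕ → Fin n) : ∀ m : ℕ, (descList g (m+1)).getLast? = some (g 0) := by
  intro m
  induction m with
  | zero => rfl
  | succ m ih =>
    have : descList g (m+2) = g (m+1) :: g m :: descList g m := rfl
    rw [this, List.getLast?_cons_cons]
    exact ih

lemma descList_pathSum {A : Type*} [AddCommMonoid A] (w : Fin n → Fin n → A) (g : ℕ → Fin n) :
    ∀ m : ℕ, pathSum w (descList g (m+1)) = ∑ l ∈ Finset.range m, w (g (l+1)) (g l) := by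
  intro m
  induction m with
  | zero => simp [descList, pathSum]
  | succ m ih =>
    have h1 : descList g (m+2) = g (m+1) :: descList g (m+1) := rfl
    have h2 : descList g (m+1) = g m :: descList g m := rfl
    rw [h1, h2, pathSum_cons_cons, ← h2, ih, Finset.sum_range_succ]
    rw [add_comm]

lemma descList_cycleSum {A : Type*} [AddCommGroup A] (w : Fin n → Fin n → A) (g : ℕ → Fin n)
    (m : ℕ) :
    cycleSum w (descList g (m+2)) =
      (∑ l ∈ Finset.range (m+1), w (g (l+1)) (g l)) + w (g 0) (g (m+1)) := by
  have h1 : descList g (m+2) = g (m+1) :: descList g (m+1) := rfl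
  have h2 : descList g (m+1) = g m :: descList g m := rfl
  have hlast : (descList g (m+1)).getLast? = some (g 0) := descList_getLast? g m
  rw [h2] at hlast
  have := cycleSum_cons_eq w (g (m+1)) (g m) (g 0) (descList g m) hlast
  rw [h1, h2, this, ← h2, descList_pathSum w g m, Finset.sum_range_succ]
  abel

/-! ### The sets `A_e(S)` of cycle sums through `u` with interior in `S` ending at `e` -/

def AA (w : Fin n → Fin n → ZMod p) (u : Fin n) (S : Finset (Fin n)) (e : Fin n) :
    Set (ZMod p) :=
  {s | ∃ Q : List (Fin n), Q.Nodup ∧ (∀ x ∈ Q, x ∈ S) ∧ Q.getLast? = some e ∧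
        s = cycleSum w (u :: Q)}

lemma AA_nonempty (w : Fin n → Fin n → ZMod p) (u : Fin n) {S : Finset (Fin n)} {e : Fin n}
    (he : e ∈ S) : (AA w u S e).Nonempty := by
  exact ⟨cycleSum w (u :: [e]), [e], by simp, by simpa using he, by simp, rfl⟩

lemma AA_mono (w : Fin n → Fin n → ZMod p) (u : Fin n) {S T : Finset (Fin n)} {e : Fin n}
    (h : S ⊆ T) : AA w u S e ⊆ AA w u T e := by
  rintro s ⟨Q, h1, h2, h3, h4⟩
  exact ⟨Q, h1, fun x hx => h (h2 x hx), h3, h4⟩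

lemma zero_not_mem_AA {w : Fin n → Fin n → ZMod p} {u : Fin n} {S : Finset (Fin n)} {e : Fin n}
    (hz : ∀ l : List (Fin n), IsCycle l → cycleSum w l ≠ 0) (huS : u ∉ S) :
    (0 : ZMod p) ∉ AA w u S e := by
  rintro ⟨Q, h1, h2, h3, h4⟩
  have hQne : Q ≠ [] := by
    intro h; subst h; simp at h3
  refine hz (u :: Q) ⟨?_, ?_⟩ h4.symm
  · rw [List.nodup_cons]
    exact ⟨fun hu => huS (h2 u hu), h1⟩
  · have : 1 ≤ Q.length := List.length_pos_iff.mpr hQne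
    simp only [List.length_cons]
    omega

lemma AA_append_subset (w : Fin n → Fin n → ZMod p) (u : Fin n) {S : Finset (Fin n)}
    {v z : Fin n} (hv : v ∈ S) :
    ((fun s => s + (w z v + w v u - w z u)) '' AA w u (S.erase v) z) ⊆ AA w u S v := by
  rintro _ ⟨s, ⟨Q, h1, h2, h3, rfl⟩, rfl⟩
  refine ⟨Q ++ [v], ?_, ?_, List.getLast?_concat, ?_⟩
  · rw [List.nodup_append]
    refine ⟨h1, List.nodup_singleton _, ?_⟩
    intro x hx y hy hxv
    rw [List.mem_singleton] at hy; subst hy; subst hxv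
    exact (Finset.ne_of_mem_erase (h2 x hx)) rfl
  · intro x hx
    rcases List.mem_append.mp hx with h | h
    · exact Finset.mem_of_mem_erase (h2 x h)
    · rw [List.mem_singleton] at h; subst h; exact hv
  · exact (cycleSum_append w u v z Q h3).symm

/-! ### The key counting claim -/

lemma claim (w : Fin n → Fin n → ZMod p) (hp : p.Prime)
    (hz : ∀ l : List (Fin n), IsCycle l → cycleSum w l ≠ 0) (u : Fin n) :
    ∀ (k : ℕ) (S : Finset (Fin n)), S.card = k → u ∉ S → S.Nonempty →
      ∃ e ∈ S, k ≤ (AA w u S e).ncard := by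
  haveI : Fact p.Prime := ⟨hp⟩
  haveI : NeZero p := ⟨hp.pos.ne'⟩
  intro k
  induction k using Nat.strong_induction_on with
  | _ k ih =>
  intro S hSc huS hSne
  by_contra hcon
  push_neg at hcon
  have hk1 : 1 ≤ k := hSc ▸ Finset.card_pos.mpr hSne
  have hk2 : 2 ≤ k := by
    by_contra hlt
    have hk : k = 1 := by omega
    obtain ⟨e, he⟩ := hSne
    have h1 := hcon e he
    have h2 : 0 < (AA w u S e).ncard :=
      (Set.ncard_pos (Set.toFinite _)).mpr (AA_nonempty w u he)
    omega
  -- key step : every vertex has a "predecessor" giving its set by a shift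
  have key : ∀ v ∈ S, ∃ z, z ∈ S ∧ z ≠ v ∧
      AA w u S v = (fun s => s + (w z v + w v u - w z u)) '' (AA w u S z) := by
    intro v hv
    have hS'card : (S.erase v).card = k - 1 := by
      rw [Finset.card_erase_of_mem hv, hSc]
    have huS' : u ∉ S.erase v := fun h => huS (Finset.mem_of_mem_erase h)
    have hS'ne : (S.erase v).Nonempty := Finset.card_pos.mp (by omega)
    obtain ⟨z, hzS', hzcard⟩ := ih (k-1) (by omega) (S.erase v) hS'card huS' hS'ne
    have hzS : z ∈ S := Finset.mem_of_mem_erase hzS'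
    have hzv : z ≠ v := Finset.ne_of_mem_erase hzS'
    have hsub : AA w u (S.erase v) z ⊆ AA w u S z := AA_mono w u (Finset.erase_subset _ _)
    have h1 : (AA w u S z).ncard < k := hcon z hzS
    have hle : (AA w u (S.erase v) z).ncard ≤ (AA w u S z).ncard :=
      Set.ncard_le_ncard hsub (Set.toFinite _)
    have heq1 : AA w u (S.erase v) z = AA w u S z :=
      Set.eq_of_subset_of_ncard_le hsub (by omega) (Set.toFinite _)
    have hsub2 := AA_append_subset w u (S := S) (v := v) (z := z) hv
    have hcard2 : ((fun s => s + (w z v + w v u - w z u)) '' (AA w u (S.erase v) z)).ncard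
        = (AA w u (S.erase v) z).ncard :=
      Set.ncard_image_of_injective _ (add_left_injective _)
    have h2 : (AA w u S v).ncard < k := hcon v hv
    have heq2 : (fun s => s + (w z v + w v u - w z u)) '' (AA w u (S.erase v) z)
        = AA w u S v :=
      Set.eq_of_subset_of_ncard_le hsub2 (by omega) (Set.toFinite _)
    exact ⟨z, hzS, hzv, by rw [← heq2, heq1]⟩
  choose! zfun hzf1 hzf2 hzf3 using key
  obtain ⟨v₀, hv₀⟩ := hSne
  set f : ℕ → Fin n := fun m => zfun^[m] v₀ with hf
  have hfS : ∀ m, f m ∈ S := by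
    intro m
    induction m with
    | zero => exact hv₀
    | succ m ihm =>
      have : f (m+1) = zfun (f m) := Function.iterate_succ_apply' zfun m v₀
      rw [this]
      exact hzf1 _ ihm
  have hfsucc : ∀ m, f (m+1) = zfun (f m) := fun m => Function.iterate_succ_apply' zfun m v₀
  set c : ℕ → ZMod p := fun l => w (f (l+1)) (f l) + w (f l) u - w (f (l+1)) u with hc
  set T : ℕ → ZMod p := fun m => ∑ l ∈ Finset.range m, c l with hT
  have hchain : ∀ m, AA w u S v₀ = (fun s => s + T m) '' (AA w u S (f m)) := by
    intro m
    induction m with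
    | zero =>
      have h0 : T 0 = 0 := by simp [hT]
      have hf0 : f 0 = v₀ := rfl
      rw [h0, hf0]
      simp
    | succ m ihm =>
      have hstep := hzf3 (f m) (hfS m)
      rw [← hfsucc m] at hstep
      rw [ihm, hstep, Set.image_image]
      have : T (m+1) = T m + c m := by
        rw [hT]; exact Finset.sum_range_succ c m
      rw [this]
      apply congrArg₂ _ _ rfl
      funext s
      rw [hc]
      ring
  -- pigeonhole: f repeats
  have hpig : ∃ a b : ℕ, a < b ∧ f a = f b := by
    have hmap : ∀ a ∈ Finset.range (S.card + 1), f a ∈ S := fun a _ => hfS a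
    have hcard : S.card < (Finset.range (S.card + 1)).card := by
      rw [Finset.card_range]; omega
    obtain ⟨x, _, y, _, hxy, hfxy⟩ :=
      Finset.exists_ne_map_eq_of_card_lt_of_maps_to hcard hmap
    rcases lt_or_gt_of_ne hxy with h | h
    · exact ⟨x, y, h, hfxy⟩
    · exact ⟨y, x, h, hfxy.symm⟩
  classical
  have hPex : ∃ j, ∃ i, i < j ∧ f i = f j := by
    obtain ⟨a, b, hab, hfab⟩ := hpig
    exact ⟨b, a, hab, hfab⟩
  set j := Nat.find hPex with hj
  obtain ⟨i, hij, hfij⟩ := Nat.find_spec hPex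
  rw [← hj] at hij hfij
  have hinj : ∀ a b : ℕ, a < b → b < j → f a ≠ f b := by
    intro a b hab hbj hfeq
    exact Nat.find_min hPex hbj ⟨a, hab, hfeq⟩
  set r := j - i with hr
  have hr1 : 1 ≤ r := by omega
  have hr2 : 2 ≤ r := by
    by_contra hlt
    have : r = 1 := by omega
    have hj1 : j = i + 1 := by omega
    have h1 : f i = zfun (f i) := by
      conv_lhs => rw [hfij, hj1]
      exact hfsucc i
    exact hzf2 (f i) (hfS i) h1.symm
  -- shift invariance of X
  set X := AA w u S (f i) with hX
  have hXj : AA w u S (f j) = X := by rw [hX, hfij]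
  have hkey : (fun s => s + T i) '' X = (fun s => s + T j) '' X := by
    have h1 := hchain i
    have h2 := hchain j
    rw [hXj] at h2
    rw [← h1, ← h2]
  set t : ZMod p := T j - T i with htdef
  have hshift : X = (fun s => s + t) '' X := by
    have h3 := congrArg (Set.image (fun s => s + (-(T i)))) hkey
    rw [Set.image_image, Set.image_image] at h3
    have e1 : (fun s => s + T i + -T i) = fun s : ZMod p => s := by funext s; ring
    have e2 : (fun s => s + T j + -T i) = fun s : ZMod p => s + t := by
      funext s; rw [htdef]; ring
    rw [e1, e2] at h3
    simpa using h3
  -- t is the sum of an actual cycle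
  set g : ℕ → Fin n := fun l => f (i + l) with hg
  have hij' : i + r = j := by omega
  have hgr : g r = g 0 := by
    rw [hg]
    simp only
    rw [hij']
    rw [← hfij]
    norm_num
  have ht : t = cycleSum w (descList g r) := by
    obtain ⟨m, hm2⟩ : ∃ m, r = m + 2 := ⟨r - 2, by omega⟩
    rw [hm2, descList_cycleSum w g m]
    have h1 : t = ∑ l ∈ Finset.Ico i j, c l := by
      rw [htdef, hT]
      exact (Finset.sum_Ico_eq_sub c (by omega)).symm
    have h2 : ∑ l ∈ Finset.Ico i j, c l
        = ∑ l ∈ Finset.Ico i j, w (f (l+1)) (f l)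
          + ∑ l ∈ Finset.Ico i j, (w (f l) u - w (f (l+1)) u) := by
      rw [← Finset.sum_add_distrib]
      apply Finset.sum_congr rfl
      intro l _
      rw [hc]; ring
    have h3 : ∑ l ∈ Finset.Ico i j, (w (f l) u - w (f (l+1)) u) = 0 := by
      have htel : ∀ b : ℕ, i ≤ b →
          ∑ l ∈ Finset.Ico i b, (w (f l) u - w (f (l+1)) u) = w (f i) u - w (f b) u := by
        intro b
        induction b with
        | zero =>
          intro hb
          have hi0 : i = 0 := Nat.le_zero.mp hb
          subst hi0
          simp
        | succ b ihb =>
          intro hb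
          rcases Nat.lt_or_ge i (b+1) with hlt | hge
          · have hib : i ≤ b := by omega
            rw [Finset.sum_Ico_succ_top hib, ihb hib]
            ring
          · have hieq : i = b + 1 := by omega
            rw [hieq]
            simp
      rw [htel j (by omega), hfij]
      ring
    have h4 : ∑ l ∈ Finset.Ico i j, w (f (l+1)) (f l)
        = ∑ l ∈ Finset.range (m+2), w (g (l+1)) (g l) := by
      rw [Finset.sum_Ico_eq_sum_range]
      have : j - i = m + 2 := by rw [← hr, hm2]
      rw [this]
      apply Finset.sum_congr rfl
      intro l _
      rw [hg]
      simp only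
      congr 2 <;> omega
    have h5 : ∑ l ∈ Finset.range (m+2), w (g (l+1)) (g l)
        = ∑ l ∈ Finset.range (m+1), w (g (l+1)) (g l) + w (g 0) (g (m+1)) := by
      rw [Finset.sum_range_succ]
      have hgr' : g (m+2) = g 0 := by rw [← hm2]; exact hgr
      rw [hgr']
    rw [h1, h2, h3, h4, h5]
    ring
  have htne : t ≠ 0 := by
    rw [ht]
    refine hz (descList g r) ⟨?_, ?_⟩
    · apply descList_nodup
      intro a b ha hb hgab
      by_contra hne
      rcases lt_or_gt_of_ne hne with hlt | hlt
      · exact hinj (i+a) (i+b) (by omega) (by omega) hgab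
      · exact hinj (i+b) (i+a) (by omega) (by omega) hgab.symm
    · rw [descList_length]; omega
  -- orbit argument: 0 ∈ X, contradiction
  have hstep' : ∀ s ∈ X, s + t ∈ X := by
    intro s hs
    rw [hshift]
    exact ⟨s, hs, rfl⟩
  have horbit : ∀ (m : ℕ), ∀ s ∈ X, s + m • t ∈ X := by
    intro m
    induction m with
    | zero => intro s hs; simpa using hs
    | succ m ihm =>
      intro s hs
      have := hstep' _ (ihm s hs)
      have heq : s + m • t + t = s + (m+1) • t := by
        rw [succ_nsmul]; ring
      rwa [heq] at this
  obtain ⟨a₀, ha₀⟩ := AA_nonempty w u (hfS i)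
  obtain ⟨m, hm⟩ : ∃ m : ℕ, (m : ZMod p) = (-a₀) * t⁻¹ :=
    ⟨((-a₀) * t⁻¹).val, ZMod.natCast_rightInverse _⟩
  have h0 : a₀ + m • t = 0 := by
    rw [nsmul_eq_mul, hm, mul_assoc, inv_mul_cancel₀ htne, mul_one]
    ring
  have hzero : (0 : ZMod p) ∈ X := by
    have := horbit m a₀ ha₀
    rwa [h0] at this
  exact zero_not_mem_AA hz huS hzero

end ZscAux

theorem stmt7 (p : ℕ) (hp : p.Prime) (hp3 : 3 ≤ p)
    (w : Fin ((3 * p - 1) / 2) → Fin ((3 * p - 1) / 2) → ZMod p) :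
    ∃ l : List (Fin ((3 * p - 1) / 2)), IsCycle l ∧ cycleSum w l = 0 := by
  haveI : NeZero p := ⟨hp.pos.ne'⟩
  by_contra hcon
  push_neg at hcon
  have hz : ∀ l : List (Fin ((3 * p - 1) / 2)), IsCycle l → cycleSum w l ≠ 0 :=
    fun l hl => hcon l hl
  have hN : p + 1 ≤ (3 * p - 1) / 2 := by
    rw [Nat.le_div_iff_mul_le (by norm_num)]
    omega
  have hN0 : 0 < (3 * p - 1) / 2 := by omega
  let u : Fin ((3 * p - 1) / 2) := ⟨0, hN0⟩
  have hrest : (Finset.univ.erase u).card = (3 * p - 1) / 2 - 1 := by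
    rw [Finset.card_erase_of_mem (Finset.mem_univ u), Finset.card_univ, Fintype.card_fin]
  obtain ⟨S, hSsub, hScard⟩ :=
    Finset.exists_subset_card_eq (s := (Finset.univ : Finset (Fin ((3*p-1)/2))).erase u)
      (n := p) (by omega)
  have huS : u ∉ S := fun h => (Finset.notMem_erase u _) (hSsub h)
  have hSne : S.Nonempty := Finset.card_pos.mp (by rw [hScard]; exact hp.pos)
  obtain ⟨e, he, hle⟩ := ZscAux.claim w hp hz u p S hScard huS hSne
  have hssub : ZscAux.AA w u S e ⊂ Set.univ := by
    rw [Set.ssubset_univ_iff]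
    intro hEq
    have h0 : (0 : ZMod p) ∈ ZscAux.AA w u S e := by rw [hEq]; trivial
    exact ZscAux.zero_not_mem_AA hz huS h0
  have hlt : (ZscAux.AA w u S e).ncard < (Set.univ : Set (ZMod p)).ncard :=
    Set.ncard_lt_ncard hssub (Set.toFinite _)
  rw [Set.ncard_univ, Nat.card_zmod] at hlt
  omega
end

section
/- Let A be a non-trivial finite abelian group and define n(A) to be the smallest integer n ≥ 2 such that every A-valued arc-labeling of the complete digraph on n vertices has a zero-sum directed cycle (such n exists). Then n(A) ≤ 8|A|, and n(A) ≥ |A| + 1 when A is cyclic. -/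
open List


section Core
variable {V : Type*} {A : Type*} [AddCommGroup A]

/-- general path sum (recursive) -/
def pS (w : V → V → A) : List V → A
  | [] => 0
  | [_] => 0
  | a :: b :: t => w a b + pS w (b :: t)

/-- general cycle sum, same formula as `cycleSum` -/
def cS (w : V → V → A) (l : List V) : A :=
  ((l.zip (l.rotate 1)).map fun p => w p.1 p.2).sum

lemma zip_tail_append (w : V → V → A) :
    ∀ (l : List V) (hl : l ≠ []) (x : V),
      ((l.zip (l.tail ++ [x])).map fun p => w p.1 p.2).sum = pS w l + w (l.getLast hl) x
  | [], hl, x => absurd rfl hl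
  | [a], _, x => by simp [pS]
  | a :: b :: t, _, x => by
      have H := zip_tail_append w (b :: t) (by simp) x
      show ((((a, b) :: ((b :: t).zip (t ++ [x]))).map fun p => w p.1 p.2)).sum = _
      rw [List.map_cons, List.sum_cons]
      simp only [List.tail] at H
      rw [H, pS]
      simp [List.getLast_cons]
      abel

lemma cS_eq_pS (w : V → V → A) (l : List V) (hl : l ≠ []) :
    cS w l = pS w l + w (l.getLast hl) (l.head hl) := by
  obtain ⟨a, t, rfl⟩ := List.exists_cons_of_ne_nil hl
  unfold cS
  rw [List.rotate_cons_succ, List.rotate_zero]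
  simpa using zip_tail_append w (a :: t) hl a

lemma pS_cons (w : V → V → A) (a : V) (l : List V) (hl : l ≠ []) :
    pS w (a :: l) = w a (l.head hl) + pS w l := by
  obtain ⟨b, t, rfl⟩ := List.exists_cons_of_ne_nil hl
  rfl

lemma pS_append (w : V → V → A) :
    ∀ (l₁ l₂ : List V) (h₁ : l₁ ≠ []) (h₂ : l₂ ≠ []),
      pS w (l₁ ++ l₂) = pS w l₁ + w (l₁.getLast h₁) (l₂.head h₂) + pS w l₂
  | [], _, h₁, _ => absurd rfl h₁
  | [a], l₂, _, h₂ => by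
      simp only [List.singleton_append, pS_cons w a l₂ h₂, pS]
      simp
  | a :: b :: t, l₂, _, h₂ => by
      have H := pS_append w (b :: t) l₂ (by simp) h₂
      show w a b + pS w (b :: (t ++ l₂)) = _
      rw [show (b :: (t ++ l₂)) = (b :: t) ++ l₂ from rfl, H, pS]
      simp [List.getLast_cons]
      abel


/-- detour increment of a gadget (x,z,y): going x→z→y instead of x→y -/
def dv (w : V → V → A) (g : V × V × V) : A :=
  w g.1 g.2.1 + w g.2.1 g.2.2 - w g.1 g.2.2

/-- the block of vertices contributed by a gadget with a choice bit -/
def blk (gb : (V × V × V) × Bool) : List V :=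
  if gb.2 then [gb.1.1, gb.1.2.1, gb.1.2.2] else [gb.1.1, gb.1.2.2]

def mkP (gbs : List ((V × V × V) × Bool)) : List V := gbs.flatMap blk

def vertsL (g : V × V × V) : List V := [g.1, g.2.1, g.2.2]

def bS (w : V → V → A) (gb : (V × V × V) × Bool) : A :=
  w gb.1.1 gb.1.2.2 + (if gb.2 then dv w gb.1 else 0)

/-- total "internal + connector" path sum over gadget list -/
def TS (w : V → V → A) : List ((V × V × V) × Bool) → A
  | [] => 0
  | [gb] => bS w gb
  | gb :: gb' :: t => bS w gb + w gb.1.2.2 gb'.1.1 + TS w (gb' :: t)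

/-- selected detour increments -/
def D (w : V → V → A) (gbs : List ((V × V × V) × Bool)) : A :=
  (gbs.map fun gb => if gb.2 then dv w gb.1 else 0).sum

lemma blk_ne_nil (gb : (V × V × V) × Bool) : blk gb ≠ [] := by
  unfold blk; cases gb.2 <;> simp


lemma blk_head (gb : (V × V × V) × Bool) : (blk gb).head (blk_ne_nil gb) = gb.1.1 := by
  obtain ⟨⟨x, z, y⟩, b⟩ := gb; cases b <;> simp [blk]

lemma blk_getLast (gb : (V × V × V) × Bool) : (blk gb).getLast (blk_ne_nil gb) = gb.1.2.2 := by
  obtain ⟨⟨x, z, y⟩, b⟩ := gb; cases b <;> simp [blk]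

lemma pS_blk (w : V → V → A) (gb : (V × V × V) × Bool) : pS w (blk gb) = bS w gb := by
  obtain ⟨⟨x, z, y⟩, b⟩ := gb; cases b <;> simp [blk, pS, bS, dv] <;> abel

lemma mkP_ne_nil (gb : (V × V × V) × Bool) (rest : List ((V × V × V) × Bool)) :
    mkP (gb :: rest) ≠ [] := by
  unfold mkP
  simp only [List.flatMap_cons]
  intro h
  exact blk_ne_nil gb (by simpa using (List.append_eq_nil_iff.mp h).1)

lemma mkP_head : ∀ (gb : (V×V×V)×Bool) (rest) ,
    (mkP (gb :: rest)).head (mkP_ne_nil gb rest) = gb.1.1 := by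
  intro gb rest
  unfold mkP
  simp only [List.flatMap_cons]
  rw [List.head_append_of_ne_nil (blk_ne_nil gb)]
  exact blk_head gb

lemma mkP_getLast : ∀ (rest) (gb : (V×V×V)×Bool),
    (mkP (gb :: rest)).getLast (mkP_ne_nil gb rest)
      = ((gb :: rest).getLast (by simp)).1.2.2 := by
  intro rest
  induction rest with
  | nil => intro gb; simp [mkP, blk_getLast gb]
  | cons gb' t ih =>
      intro gb
      have h2 : mkP (gb' :: t) ≠ [] := mkP_ne_nil gb' t
      have : mkP (gb :: gb' :: t) = blk gb ++ mkP (gb' :: t) := by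
        simp [mkP]
      rw [List.getLast_congr _ _ this, List.getLast_append_of_ne_nil _ h2]
      · rw [ih gb']
        simp [List.getLast_cons]
      · exact (this ▸ mkP_ne_nil gb (gb' :: t))

lemma pS_mkP (w : V → V → A) : ∀ (rest) (gb : (V×V×V)×Bool),
    pS w (mkP (gb :: rest)) = TS w (gb :: rest) := by
  intro rest
  induction rest with
  | nil => intro gb; simp [mkP, pS_blk, TS]
  | cons gb' t ih =>
      intro gb
      have h2 : mkP (gb' :: t) ≠ [] := mkP_ne_nil gb' t
      have e : mkP (gb :: gb' :: t) = blk gb ++ mkP (gb' :: t) := by simp [mkP]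
      rw [e, pS_append w _ _ (blk_ne_nil gb) h2, pS_blk, blk_getLast,
        mkP_head gb' t, ih gb', TS]

lemma cS_mkP (w : V → V → A) (gb : (V×V×V)×Bool) (rest) :
    cS w (mkP (gb :: rest)) =
      TS w (gb :: rest) + w (((gb :: rest).getLast (by simp)).1.2.2) gb.1.1 := by
  rw [cS_eq_pS w _ (mkP_ne_nil gb rest), pS_mkP, mkP_getLast, mkP_head]

/-- TS splits into the base (all-false) part and selected increments. -/
lemma TS_split (w : V → V → A) : ∀ (gbs : List ((V×V×V)×Bool)),
    TS w gbs = TS w (gbs.map fun gb => (gb.1, false)) + D w gbs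
  | [] => by simp [TS, D]
  | [gb] => by simp [TS, D, bS]
  | gb :: gb' :: t => by
      have := TS_split w (gb' :: t)
      simp only [List.map_cons, TS, this, D, List.map_cons, List.sum_cons, bS,
        Bool.false_eq_true, if_false]
      abel

end Core
section Core2
variable {V : Type*} {A : Type*} [AddCommGroup A]

lemma cS_mkP' (w : V → V → A) (gbs : List ((V×V×V)×Bool)) (h : gbs ≠ []) :
    cS w (mkP gbs) = TS w gbs + w ((gbs.getLast h).1.2.2) ((gbs.head h).1.1) := by
  obtain ⟨gb, rest, rfl⟩ := List.exists_cons_of_ne_nil h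
  rw [cS_mkP]
  rfl

lemma cS_mkP_split (w : V → V → A) (gbs : List ((V×V×V)×Bool)) (h : gbs ≠ []) :
    cS w (mkP gbs) = cS w (mkP (gbs.map fun gb => (gb.1, false))) + D w gbs := by
  have hm : gbs.map (fun gb => (gb.1, false)) ≠ [] := by
    simpa using h
  rw [cS_mkP' w gbs h, cS_mkP' w _ hm, List.getLast_map, List.head_map,
    TS_split w gbs]
  abel

lemma blk_sublist (gb : (V×V×V)×Bool) : blk gb <+ vertsL gb.1 := by
  obtain ⟨⟨x, z, y⟩, b⟩ := gb
  cases b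
  · exact List.Sublist.cons₂ x (List.sublist_cons_self z [y])
  · exact List.Sublist.refl _

lemma mkP_sublist : ∀ gbs : List ((V×V×V)×Bool),
    mkP gbs <+ (gbs.map Prod.fst).flatMap vertsL
  | [] => by simp [mkP]
  | gb :: rest => by
      have : mkP (gb :: rest) = blk gb ++ mkP rest := by simp [mkP]
      rw [this]
      simpa using List.Sublist.append (blk_sublist gb) (mkP_sublist rest)

/-- cyclic sums over nodup lists (length ≥ 2) of S-vertices lie in H -/
lemma cS_mem (H : AddSubgroup A) (w : V → V → A) (S : Finset V)
    (hw : ∀ x ∈ S, ∀ y ∈ S, x ≠ y → w x y ∈ H)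
    (l : List V) (hn : l.Nodup) (hl : 2 ≤ l.length) (hm : ∀ v ∈ l, v ∈ S) :
    cS w l ∈ H := by
  apply AddSubgroup.list_sum_mem
  intro a ha
  simp only [List.mem_map] at ha
  obtain ⟨p, hp, rfl⟩ := ha
  obtain ⟨i, hi, hvp⟩ := List.mem_iff_getElem.mp hp
  have hlen : (l.zip (l.rotate 1)).length = l.length := by
    simp [List.length_zip]
  rw [hlen] at hi
  have h1 : p.1 = l[i] := by
    rw [← hvp]; simp [List.getElem_zip]
  have hi2 : (i + 1) % l.length < l.length := Nat.mod_lt _ (by omega)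
  have h2 : p.2 = l[(i + 1) % l.length] := by
    rw [← hvp]
    simp only [List.getElem_zip]
    rw [List.getElem_rotate]
  have hne : l[i] ≠ l[(i + 1) % l.length] := by
    intro heq
    have hij := hn.getElem_inj_iff.mp heq
    rcases Nat.lt_or_ge (i+1) l.length with hlt | hge
    · rw [Nat.mod_eq_of_lt hlt] at hij; omega
    · have hieq : i + 1 = l.length := by omega
      rw [hieq, Nat.mod_self] at hij
      omega
  rw [h1, h2]
  exact hw _ (hm _ (List.getElem_mem _)) _ (hm _ (List.getElem_mem _)) hne

lemma list_sum_map_add {β : Type*} (f g : β → A) (L : List β) :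
    (L.map fun b => f b + g b).sum = (L.map f).sum + (L.map g).sum := by
  induction L with
  | nil => simp
  | cons b t ih => simp [ih]; abel

/-- cyclic sums are invariant under potential shifts -/
lemma cS_shift (w : V → V → A) (f : V → A) (l : List V) :
    cS (fun x y => w x y + (f x - f y)) l = cS w l := by
  show (List.map (fun p : V × V => w p.1 p.2 + (f p.1 - f p.2)) (l.zip (l.rotate 1))).sum = _
  rw [list_sum_map_add (fun p : V × V => w p.1 p.2) (fun p : V × V => f p.1 - f p.2)]
  have h1 : ((l.zip (l.rotate 1)).map fun p : V × V => f p.1 - f p.2).sum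
      = ((l.zip (l.rotate 1)).map fun p : V × V => f p.1).sum
        - ((l.zip (l.rotate 1)).map fun p : V × V => f p.2).sum := by
    induction (l.zip (l.rotate 1)) with
    | nil => simp
    | cons b t ih => simp [ih]; abel
  have e1 : ((l.zip (l.rotate 1)).map fun p : V × V => f p.1) = l.map f := by
    rw [show (fun p : V × V => f p.1) = f ∘ Prod.fst by rfl, ← List.map_map,
      List.map_fst_zip (by simp)]
  have e2 : ((l.zip (l.rotate 1)).map fun p : V × V => f p.2) = (l.rotate 1).map f := by
    rw [show (fun p : V × V => f p.2) = f ∘ Prod.snd by rfl, ← List.map_map,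
      List.map_snd_zip (by simp)]
  have e3 : ((l.rotate 1).map f).sum = (l.map f).sum :=
    ((List.rotate_perm l 1).map f).sum_eq
  rw [h1, e1, e2, e3]
  simp [cS]

end Core2
section Win
variable {V : Type*} {A : Type*} [DecidableEq V] [DecidableEq A] [AddCommGroup A]

/-- additive stabilizer of a finite set -/
def stabF (T : Finset A) : AddSubgroup A where
  carrier := {a | ∀ t ∈ T, t + a ∈ T}
  zero_mem' := by simp
  add_mem' := by
    intro a b ha hb t ht
    rw [← add_assoc]
    exact hb _ (ha t ht)
  neg_mem' := by
    intro a ha t ht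
    have himg : T.image (· + a) = T := by
      apply Finset.eq_of_subset_of_card_le
      · intro x hx
        simp only [Finset.mem_image] at hx
        obtain ⟨t', ht', rfl⟩ := hx
        exact ha t' ht'
      · rw [Finset.card_image_of_injective _ (add_left_injective a)]
    rw [← himg] at ht
    simp only [Finset.mem_image] at ht
    obtain ⟨t', ht', rfl⟩ := ht
    simpa using ht'

lemma blk_two_le_length (gb : (V×V×V)×Bool) : 2 ≤ (blk gb).length := by
  obtain ⟨⟨x, z, y⟩, b⟩ := gb; cases b <;> simp [blk]

lemma mkP_two_le_length (gb : (V×V×V)×Bool) (rest) : 2 ≤ (mkP (gb :: rest)).length := by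
  have : mkP (gb :: rest) = blk gb ++ mkP rest := by simp [mkP]
  rw [this, List.length_append]
  have := blk_two_le_length gb
  omega

lemma win (H : AddSubgroup A) (h : ℕ) (hh : Nat.card H = h) (h2 : 2 ≤ h)
    (w : V → V → A) (S : Finset V)
    (hw : ∀ x ∈ S, ∀ y ∈ S, x ≠ y → w x y ∈ H)
    (T : Finset A) (gs : List (V×V×V))
    (hTH : ↑T = (H : Set A))
    (hreal : ∀ t ∈ T, ∃ bs : List Bool, bs.length = gs.length ∧ D w (gs.zip bs) = t)
    (hnd : (gs.flatMap vertsL).Nodup)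
    (hmem : ∀ v ∈ gs.flatMap vertsL, v ∈ S) :
    ∃ l : List V, l.Nodup ∧ 2 ≤ l.length ∧ (∀ v ∈ l, v ∈ S) ∧ cS w l = 0 := by
  -- T has at least 2 elements
  have hTcard : 1 < T.card := by
    have : (↑T : Set A).ncard = Nat.card H := by
      rw [hTH]
      exact (Nat.card_coe_set_eq _).symm
    rw [Set.ncard_coe_finset] at this
    omega
  obtain ⟨a, ha, b, hb, hab⟩ := Finset.one_lt_card.mp hTcard
  have hne0 : ∃ t ∈ T, t ≠ 0 := by
    rcases eq_or_ne a 0 with rfl | h'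
    · exact ⟨b, hb, fun hb0 => hab hb0.symm⟩
    · exact ⟨a, ha, h'⟩
  -- gs is nonempty
  have hgs : gs ≠ [] := by
    obtain ⟨t, ht, ht0⟩ := hne0
    obtain ⟨bs, hlen, hD⟩ := hreal t ht
    intro h0
    subst h0
    simp [D] at hD
    exact ht0 hD.symm
  obtain ⟨g0, grest, rfl⟩ := List.exists_cons_of_ne_nil hgs
  -- the base cycle
  set gs0 : List ((V×V×V)×Bool) := (g0 :: grest).map (fun g => (g, false)) with hgs0
  have hmapfst0 : gs0.map Prod.fst = g0 :: grest := by
    rw [hgs0, List.map_map]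
    simp [Function.comp_def]
  have hsub0 : mkP gs0 <+ ((g0 :: grest).flatMap vertsL) := by
    have := mkP_sublist gs0
    rwa [hmapfst0] at this
  have hnd0 : (mkP gs0).Nodup := hnd.sublist hsub0
  have hmem0 : ∀ v ∈ mkP gs0, v ∈ S := fun v hv => hmem v (hsub0.mem hv)
  have hlen0 : 2 ≤ (mkP gs0).length := mkP_two_le_length _ _
  have hbase : cS w (mkP gs0) ∈ H := cS_mem H w S hw _ hnd0 hlen0 hmem0
  set base := cS w (mkP gs0) with hbasedef
  -- realize -base
  have hmemT : -base ∈ T := by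
    have : -base ∈ (↑T : Set A) := by rw [hTH]; exact neg_mem hbase
    exact_mod_cast this
  obtain ⟨bs, hlen, hD⟩ := hreal _ hmemT
  set gbs := (g0 :: grest).zip bs with hgbs
  have hbs : bs ≠ [] := by
    intro h0; rw [h0] at hlen; simp at hlen
  obtain ⟨b0, brest, rfl⟩ := List.exists_cons_of_ne_nil hbs
  have hgbseq : gbs = (g0, b0) :: (grest.zip brest) := by rw [hgbs]; rfl
  have hmapfst : gbs.map Prod.fst = g0 :: grest :=
    List.map_fst_zip (by rw [hlen])
  have hsub : mkP gbs <+ ((g0 :: grest).flatMap vertsL) := by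
    have := mkP_sublist gbs
    rwa [hmapfst] at this
  refine ⟨mkP gbs, hnd.sublist hsub, ?_, fun v hv => hmem v (hsub.mem hv), ?_⟩
  · rw [hgbseq]; exact mkP_two_le_length _ _
  · have hsplit := cS_mkP_split w gbs (by rw [hgbseq]; simp)
    have : gbs.map (fun gb => (gb.1, false)) = gs0 := by
      rw [hgs0, ← hmapfst, List.map_map]
      rfl
    rw [hsplit, this, ← hbasedef, hD]
    simp
end Win
section Key
variable {V : Type*} {A : Type*} [DecidableEq V] [DecidableEq A] [AddCommGroup A] [Fintype A]

lemma D_append (w : V → V → A) (u v : List ((V×V×V)×Bool)) :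
    D w (u ++ v) = D w u + D w v := by simp [D]

lemma ncard_coe_addsubgroup (H : AddSubgroup A) : (H : Set A).ncard = Nat.card H := by
  rw [← Nat.card_coe_set_eq]
  rfl

theorem key : ∀ (h : ℕ) (H : AddSubgroup A), Nat.card H = h →
    ∀ (w : V → V → A) (S : Finset V),
      (∀ x ∈ S, ∀ y ∈ S, x ≠ y → w x y ∈ H) → 7 * h ≤ S.card →
      ∃ l : List V, l.Nodup ∧ 2 ≤ l.length ∧ (∀ v ∈ l, v ∈ S) ∧ cS w l = 0 := by
  intro h
  induction h using Nat.strong_induction_on with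
  | _ h IH =>
  intro H hh w S hw hS
  have hpos : 0 < h := by
    rw [← hh]; exact Nat.card_pos
  rcases eq_or_lt_of_le (Nat.succ_le_of_lt hpos) with h1 | h2
  · -- h = 1 : trivial subgroup, any 2-cycle is zero-sum
    have hbot : H = ⊥ := AddSubgroup.eq_bot_of_card_eq H (by omega)
    have hcard2 : 1 < S.card := by omega
    obtain ⟨a, ha, b, hb, hab⟩ := Finset.one_lt_card.mp hcard2
    refine ⟨[a, b], by simp [hab], by simp, by simp [ha, hb], ?_⟩
    have e : cS w [a, b] = w a b + w b a := by
      simp [cS, List.rotate_cons_succ]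
    have h1' : w a b = 0 := by
      have := hw a ha b hb hab; rwa [hbot, AddSubgroup.mem_bot] at this
    have h2' : w b a = 0 := by
      have := hw b hb a ha hab.symm; rwa [hbot, AddSubgroup.mem_bot] at this
    rw [e, h1', h2', add_zero]
  · -- h ≥ 2
    have dowin : ∀ (T : Finset A) (gs : List (V×V×V)),
        h ≤ T.card → ↑T ⊆ (H : Set A) →
        (∀ t ∈ T, ∃ bs : List Bool, bs.length = gs.length ∧ D w (gs.zip bs) = t) →
        (gs.flatMap vertsL).Nodup → (∀ v ∈ gs.flatMap vertsL, v ∈ S) →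
        ∃ l : List V, l.Nodup ∧ 2 ≤ l.length ∧ (∀ v ∈ l, v ∈ S) ∧ cS w l = 0 := by
      intro T gs hTc hTH hreal hnd hmemg
      have hTeq : ↑T = (H : Set A) := by
        apply Set.eq_of_subset_of_ncard_le hTH
        rw [Set.ncard_coe_finset, ← Nat.card_coe_set_eq]
        show Nat.card H ≤ T.card
        omega
      exact win H h hh h2 w S hw T gs hTeq hreal hnd hmemg
    have inner : ∀ (k : ℕ) (T : Finset A) (gs : List (V×V×V)) (R : Finset V),
        (0:A) ∈ T → ↑T ⊆ (H : Set A) → h ≤ T.card + k →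
        (∀ t ∈ T, ∃ bs : List Bool, bs.length = gs.length ∧ D w (gs.zip bs) = t) →
        (gs.flatMap vertsL).Nodup → (∀ v ∈ gs.flatMap vertsL, v ∈ S) →
        (∀ v ∈ gs.flatMap vertsL, v ∉ R) → R ⊆ S → 4 * h + 2 + 3 * k ≤ R.card →
        ∃ l : List V, l.Nodup ∧ 2 ≤ l.length ∧ (∀ v ∈ l, v ∈ S) ∧ cS w l = 0 := by
      intro k
      induction k with
      | zero =>
        intro T gs R hT0 hTH hcnt hreal hnd hmemg hdisj hRS hR
        exact dowin T gs (by omega) hTH hreal hnd hmemg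
      | succ k ih =>
        intro T gs R hT0 hTH hcnt hreal hnd hmemg hdisj hRS hR
        by_cases hfull : h ≤ T.card
        · exact dowin T gs hfull hTH hreal hnd hmemg
        by_cases hex : ∃ x ∈ R, ∃ z ∈ R, ∃ y ∈ R,
            x ≠ z ∧ x ≠ y ∧ z ≠ y ∧ ∃ t ∈ T, t + dv w (x, z, y) ∉ T
        · -- gadget case
          obtain ⟨x, hx, z, hz, y, hy, hxz, hxy, hzy, t₀, ht₀, hnotin⟩ := hex
          set d := dv w (x, z, y) with hd
          have hdH : d ∈ H := by
            rw [hd]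
            unfold dv
            exact sub_mem (add_mem (hw x (hRS hx) z (hRS hz) hxz)
              (hw z (hRS hz) y (hRS hy) hzy)) (hw x (hRS hx) y (hRS hy) hxy)
          set T' := T ∪ T.image (· + d) with hT'
          set gs' := gs ++ [(x, z, y)] with hgs'
          set R' := ((R.erase x).erase z).erase y with hR'
          have hTsub : T ⊆ T' := Finset.subset_union_left
          have hTss : T ⊂ T' := by
            refine ⟨hTsub, fun hsub => hnotin (hsub ?_)⟩
            exact Finset.mem_union_right _ (Finset.mem_image_of_mem _ ht₀)
          have hcard' : T.card + 1 ≤ T'.card := Finset.card_lt_card hTss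
          have hflat : gs'.flatMap vertsL = gs.flatMap vertsL ++ [x, z, y] := by
            rw [hgs', List.flatMap_append]
            rfl
          have hmemR' : ∀ v, v ∈ R' → v ∈ R := by
            intro v hv
            rw [hR'] at hv
            exact Finset.mem_of_mem_erase (Finset.mem_of_mem_erase
              (Finset.mem_of_mem_erase hv))
          apply ih T' gs' R'
          · exact hTsub hT0
          · intro t ht
            rcases Finset.mem_union.mp ht with ht | ht
            · exact hTH ht
            · simp only [Finset.mem_coe, Finset.mem_image] at ht
              obtain ⟨s, hs, rfl⟩ := ht
              exact add_mem (hTH hs) hdH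
          · omega
          · intro t ht
            rcases Finset.mem_union.mp ht with ht | ht
            · obtain ⟨bs, hlen, hDv⟩ := hreal t ht
              refine ⟨bs ++ [false], by simp [hgs', hlen], ?_⟩
              rw [hgs', List.zip_append hlen.symm, D_append, hDv]
              simp [D]
            · simp only [Finset.mem_image] at ht
              obtain ⟨s, hs, rfl⟩ := ht
              obtain ⟨bs, hlen, hDv⟩ := hreal s hs
              refine ⟨bs ++ [true], by simp [hgs', hlen], ?_⟩
              rw [hgs', List.zip_append hlen.symm, D_append, hDv]
              simp [D, hd]
          · rw [hflat, List.nodup_append]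
            refine ⟨hnd, by simp [hxz, hxy, hzy], ?_⟩
            intro v hv b hv' hvb
            subst hvb
            have : v ∉ R := hdisj v hv
            simp only [List.mem_cons, List.mem_singleton, List.not_mem_nil] at hv'
            rcases hv' with rfl | rfl | rfl | h'
            · exact this hx
            · exact this hz
            · exact this hy
            · exact h'
          · intro v hv
            rw [hflat, List.mem_append] at hv
            rcases hv with hv | hv
            · exact hmemg v hv
            · simp only [List.mem_cons, List.mem_singleton, List.not_mem_nil] at hv
              rcases hv with rfl | rfl | rfl | h'
              · exact hRS hx
              · exact hRS hz
              · exact hRS hy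
              · exact absurd h' (by simp)
          · intro v hv hvR'
            rw [hflat, List.mem_append] at hv
            rcases hv with hv | hv
            · exact hdisj v hv (hmemR' v hvR')
            · simp only [List.mem_cons, List.mem_singleton, List.not_mem_nil] at hv
              rw [hR'] at hvR'
              rcases hv with h1 | h1 | h1 | h'
              · rw [h1] at hvR'
                exact Finset.notMem_erase x _
                  (Finset.mem_of_mem_erase (Finset.mem_of_mem_erase hvR'))
              · rw [h1] at hvR'
                exact Finset.notMem_erase z _ (Finset.mem_of_mem_erase hvR')
              · rw [h1] at hvR'
                exact Finset.notMem_erase y _ hvR'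
              · exact h'
          · exact fun v hv => hRS (hmemR' v hv)
          · have hxR : x ∈ R := hx
            have hzR : z ∈ R.erase x := Finset.mem_erase.mpr ⟨hxz.symm, hz⟩
            have hyR : y ∈ (R.erase x).erase z :=
              Finset.mem_erase.mpr ⟨hzy.symm, Finset.mem_erase.mpr ⟨hxy.symm, hy⟩⟩
            have e1 := Finset.card_erase_of_mem hxR
            have e2 := Finset.card_erase_of_mem hzR
            have e3 := Finset.card_erase_of_mem hyR
            rw [hR']
            have hRcard : 1 ≤ R.card := by omega
            omega
        · -- descent case
          push_neg at hex
          have hRne : R.Nonempty := Finset.card_pos.mp (by omega)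
          obtain ⟨x₀, hx₀⟩ := hRne
          set Dset : Set A := {a | ∃ x ∈ R, ∃ z ∈ R, ∃ y ∈ R,
            x ≠ z ∧ x ≠ y ∧ z ≠ y ∧ dv w (x, z, y) = a} with hDset
          set H' := AddSubgroup.closure Dset with hH'
          have hDstab : ∀ a ∈ Dset, ∀ t ∈ T, t + a ∈ T := by
            rintro a ⟨x, hx, z, hz, y, hy, hxz, hxy, hzy, rfl⟩ t ht
            exact hex x hx z hz y hy hxz hxy hzy t ht
          have hDH : Dset ⊆ (H : Set A) := by
            rintro a ⟨x, hx, z, hz, y, hy, hxz, hxy, hzy, rfl⟩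
            unfold dv
            exact sub_mem (add_mem (hw x (hRS hx) z (hRS hz) hxz)
              (hw z (hRS hz) y (hRS hy) hzy)) (hw x (hRS hx) y (hRS hy) hxy)
          have hH'H : H' ≤ H := (AddSubgroup.closure_le H).mpr hDH
          have hH'stab : H' ≤ stabF T := (AddSubgroup.closure_le (stabF T)).mpr hDstab
          have hne : H' ≠ H := by
            intro heq
            apply hfull
            have hHT : (H : Set A) ⊆ ↑T := by
              intro a haH
              have : a ∈ stabF T := hH'stab (heq ▸ haH)
              have := this 0 hT0
              simpa using this
            have : (↑T : Set A) = (H : Set A) := Set.Subset.antisymm hTH hHT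
            have : T.card = h := by
              rw [← Set.ncard_coe_finset, this, ncard_coe_addsubgroup, hh]
            omega
          set h' := Nat.card H' with hh'
          have hlt : h' < h := by
            have hss : (H' : Set A) ⊂ (H : Set A) := by
              refine ⟨hH'H, fun hsub => hne ?_⟩
              exact le_antisymm hH'H fun a ha => hsub ha
            have := Set.ncard_lt_ncard hss (Set.toFinite _)
            rwa [ncard_coe_addsubgroup, ncard_coe_addsubgroup, hh] at this
          have hdvd : h' ∣ h := by
            rw [hh', ← hh]
            exact AddSubgroup.card_dvd_of_le hH'H
          have h2h : 2 * h' ≤ h := by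
            obtain ⟨c, hc⟩ := hdvd
            have hc2 : 2 ≤ c := by
              rcases Nat.lt_or_ge c 2 with hcl | hcl
              · interval_cases c <;> omega
              · exact hcl
            calc 2 * h' ≤ h' * c := by nlinarith [Nat.zero_le h']
            _ = h := hc.symm
          set S' := R.erase x₀ with hS'
          set w' : V → V → A := fun u v => w x₀ u + w u v - w x₀ v with hw'def
          have hw' : ∀ u ∈ S', ∀ v ∈ S', u ≠ v → w' u v ∈ H' := by
            intro u hu v hv huv
            have hu' : u ∈ R := Finset.mem_of_mem_erase hu
            have hv' : v ∈ R := Finset.mem_of_mem_erase hv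
            have hux : u ≠ x₀ := Finset.ne_of_mem_erase hu
            have hvx : v ≠ x₀ := Finset.ne_of_mem_erase hv
            apply AddSubgroup.subset_closure
            exact ⟨x₀, hx₀, u, hu', v, hv', hux.symm, hvx.symm, huv, rfl⟩
          have hScard : 7 * h' ≤ S'.card := by
            rw [hS', Finset.card_erase_of_mem hx₀]
            omega
          obtain ⟨l', hnd', hlen', hmem', hsum'⟩ := IH h' hlt H' rfl w' S' hw' hScard
          refine ⟨l', hnd', hlen', fun v hv => hRS (Finset.mem_of_mem_erase (hmem' v hv)), ?_⟩
          have : cS w' l' = cS w l' := by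
            have : w' = fun u v => w u v + ((fun t => w x₀ t) u - (fun t => w x₀ t) v) := by
              funext u v
              show w x₀ u + w u v - w x₀ v = _
              abel
            rw [this, cS_shift]
          rwa [this] at hsum'
    -- kick off
    apply inner (h - 1) {0} [] S
    · exact Finset.mem_singleton_self 0
    · intro a ha
      simp only [Finset.coe_singleton, Set.mem_singleton_iff] at ha
      rw [ha]
      exact zero_mem H
    · simp; omega
    · intro t ht
      rw [Finset.mem_singleton] at ht
      exact ⟨[], by simp, by simp [D, ht]⟩
    · simp
    · simp
    · simp
    · exact Finset.Subset.refl S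
    · omega
end Key
section Lower
variable {A : Type*} [AddCommGroup A]

lemma sum_map_ite {β : Type*} (Q : β → Prop) [DecidablePred Q] (g : A) (L : List β) :
    (L.map fun b => if Q b then g else 0).sum = (L.countP fun b => decide (Q b)) • g := by
  induction L with
  | nil => simp
  | cons b t ih =>
      by_cases hb : Q b <;>
        simp [List.countP_cons, hb, ih, add_nsmul, succ_nsmul] <;> abel

lemma ascent_bound {n : ℕ} (l : List (Fin n)) (hnd : l.Nodup) (hl : 2 ≤ l.length) :
    ∃ c : ℕ, 1 ≤ c ∧ c ≤ l.length - 1 ∧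
      ∀ (g : A), cycleSum (fun i j : Fin n => if i < j then g else 0) l = c • g := by
  classical
  set Z := l.zip (l.rotate 1) with hZ
  have hZlen : Z.length = l.length := by simp [hZ]
  set c := Z.countP (fun p => decide (p.1 < p.2)) with hc
  have pairat : ∀ i (hi : i < l.length), ∃ j, ∃ (hj : j < l.length),
      (l[i]'hi, l[j]'hj) ∈ Z ∧ l[i]'hi ≠ l[j]'hj := by
    intro i hi
    have hj : (i + 1) % l.length < l.length := Nat.mod_lt _ (by omega)
    refine ⟨(i + 1) % l.length, hj, ?_, ?_⟩
    · have hi' : i < Z.length := by omega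
      have hval : Z[i]'hi' = (l[i]'hi, l[(i + 1) % l.length]'hj) := by
        simp only [hZ, List.getElem_zip, List.getElem_rotate]
      rw [← hval]
      exact List.getElem_mem hi'
    · intro heq
      have hij := hnd.getElem_inj_iff.mp heq
      rcases Nat.lt_or_ge (i + 1) l.length with hlt | hge
      · rw [Nat.mod_eq_of_lt hlt] at hij; omega
      · have h1 : i + 1 = l.length := by omega
        rw [h1, Nat.mod_self] at hij; omega
  have hlne : l ≠ [] := by
    intro h0; rw [h0] at hl; simp at hl
  have hFne : l.toFinset.Nonempty := by
    simpa [List.toFinset_nonempty_iff] using hlne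
  have hasc : 0 < c := by
    rw [hc, List.countP_pos_iff]
    have hmem : l.toFinset.min' hFne ∈ l := by
      rw [← List.mem_toFinset]; exact l.toFinset.min'_mem hFne
    obtain ⟨i, hi, hgi⟩ := List.mem_iff_getElem.mp hmem
    obtain ⟨j, hj, hmemZ, hneq⟩ := pairat i hi
    refine ⟨_, hmemZ, ?_⟩
    simp only [decide_eq_true_eq]
    have hle : l.toFinset.min' hFne ≤ l[j]'hj := by
      apply l.toFinset.min'_le
      rw [List.mem_toFinset]
      exact List.getElem_mem _
    rw [hgi]
    exact lt_of_le_of_ne hle (hgi ▸ hneq)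
  have hdesc : c ≠ Z.length := by
    intro heq
    have hall := List.countP_eq_length.mp heq
    have hmem : l.toFinset.max' hFne ∈ l := by
      rw [← List.mem_toFinset]; exact l.toFinset.max'_mem hFne
    obtain ⟨i, hi, hgi⟩ := List.mem_iff_getElem.mp hmem
    obtain ⟨j, hj, hmemZ, hneq⟩ := pairat i hi
    have hP := hall _ hmemZ
    simp only [decide_eq_true_eq] at hP
    have hle : l[j]'hj ≤ l.toFinset.max' hFne := by
      apply l.toFinset.le_max'
      rw [List.mem_toFinset]
      exact List.getElem_mem _
    rw [hgi] at hP
    exact absurd hP (not_lt.mpr hle)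
  have hcle : c ≤ Z.length := List.countP_le_length
  refine ⟨c, hasc, by omega, fun g => ?_⟩
  unfold cycleSum
  rw [← hZ]
  exact sum_map_ite (fun p : Fin n × Fin n => p.1 < p.2) g Z
end Lower

theorem stmt8 {A : Type*} [AddCommGroup A] [Fintype A] [Nontrivial A] :
    {n : ℕ | 2 ≤ n ∧ ∀ w : Fin n → Fin n → A,
        ∃ l : List (Fin n), IsCycle l ∧ cycleSum w l = 0}.Nonempty ∧
    sInf {n : ℕ | 2 ≤ n ∧ ∀ w : Fin n → Fin n → A,
        ∃ l : List (Fin n), IsCycle l ∧ cycleSum w l = 0} ≤ 8 * Fintype.card A ∧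
    (IsAddCyclic A →
      Fintype.card A + 1 ≤ sInf {n : ℕ | 2 ≤ n ∧ ∀ w : Fin n → Fin n → A,
        ∃ l : List (Fin n), IsCycle l ∧ cycleSum w l = 0}) := by
  classical
  have hm2 : 2 ≤ Fintype.card A := Fintype.one_lt_card
  have hmem : 8 * Fintype.card A ∈ {n : ℕ | 2 ≤ n ∧ ∀ w : Fin n → Fin n → A,
      ∃ l : List (Fin n), IsCycle l ∧ cycleSum w l = 0} := by
    refine ⟨by omega, fun w => ?_⟩
    have hcard : Nat.card (⊤ : AddSubgroup A) = Fintype.card A := by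
      rw [AddSubgroup.card_top, Nat.card_eq_fintype_card]
    obtain ⟨l, hnd, hlen, -, hsum⟩ := key (V := Fin (8 * Fintype.card A)) (A := A)
      (Fintype.card A) ⊤ hcard w Finset.univ
      (fun x _ y _ _ => AddSubgroup.mem_top _)
      (by simp only [Finset.card_univ, Fintype.card_fin]; omega)
    exact ⟨l, ⟨hnd, hlen⟩, hsum⟩
  refine ⟨⟨_, hmem⟩, Nat.sInf_le hmem, fun hcyc => ?_⟩
  have hlb : ∀ n ∈ {n : ℕ | 2 ≤ n ∧ ∀ w : Fin n → Fin n → A,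
      ∃ l : List (Fin n), IsCycle l ∧ cycleSum w l = 0}, Fintype.card A + 1 ≤ n := by
    rintro n ⟨hn2, hall⟩
    by_contra hcon
    push_neg at hcon
    obtain ⟨g, hg⟩ := hcyc.exists_generator
    have hord : addOrderOf g = Fintype.card A := by
      rw [addOrderOf_eq_card_of_forall_mem_zmultiples hg, Nat.card_eq_fintype_card]
    obtain ⟨l, ⟨hnd, hlen⟩, hsum⟩ := hall (fun i j => if i < j then g else (0 : A))
    obtain ⟨c, hc1, hc2, hcs⟩ := ascent_bound (A := A) l hnd hlen
    rw [hcs g] at hsum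
    have hdvd : Fintype.card A ∣ c := by
      rw [← hord]
      exact addOrderOf_dvd_iff_nsmul_eq_zero.mpr hsum
    have hklen : l.length ≤ n := by
      simpa using hnd.length_le_card
    have := Nat.le_of_dvd hc1 hdvd
    omega
  exact hlb _ (Nat.sInf_mem ⟨_, hmem⟩)
end

section
/- Let q ≥ 2 and suppose every ZMod q-valued arc-labeling of the complete digraph on n vertices has a zero-sum directed cycle. Let G be a graph containing K_{2n} as a minor. Then G contains a cycle whose length is divisible by q. -/
/-- `G` contains the complete graph on `m` vertices as a minor: there are `m`
pairwise disjoint connected branch sets with an edge of `G` between every two. -/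
def HasCompleteMinor {V : Type*} (G : SimpleGraph V) (m : ℕ) : Prop :=
  ∃ B : Fin m → Set V,
    (∀ i, ((⊤ : G.Subgraph).induce (B i)).Connected) ∧
    (∀ i j, i ≠ j → Disjoint (B i) (B j)) ∧
    (∀ i j, i ≠ j → ∃ u ∈ B i, ∃ v ∈ B j, G.Adj u v)

namespace ZSAux

open SimpleGraph

variable {V : Type*} {G : SimpleGraph V}

lemma support_dropLast_concat {u v : V} (p : G.Walk u v) :
    p.support.dropLast ++ [v] = p.support := by
  conv_rhs => rw [← List.dropLast_append_getLast p.support_ne_nil]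
  rw [Walk.getLast_support]

lemma dropLast_support_append {u v w : V} (p : G.Walk u v) (p' : G.Walk v w) :
    (p.append p').support.dropLast = p.support.dropLast ++ p'.support.dropLast := by
  cases p' with
  | nil => rw [Walk.append_nil]; simp
  | cons h q =>
    obtain ⟨d, s, hq⟩ : ∃ d s, q.support = d :: s := ⟨_, _, q.support_eq_cons⟩
    rw [Walk.support_append, Walk.support_cons, List.tail_cons, hq,
      List.dropLast_append_cons, List.dropLast_cons₂]
    conv_lhs => rw [← support_dropLast_concat p]
    simp only [List.append_assoc, List.singleton_append]

/-- Concatenate the chosen walks `seg` along a list of indices. -/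
def walkAlong {ι : Type*} {v : ι → V} (seg : ∀ i j : ι, G.Walk (v i) (v j)) :
    (i : ι) → (l : List ι) → (j : ι) → G.Walk (v i) (v j)
  | i, [], j => seg i j
  | i, a :: t, j => (seg i a).append (walkAlong seg a t j)

lemma walkAlong_support_dropLast {ι : Type*} {v : ι → V}
    (seg : ∀ i j : ι, G.Walk (v i) (v j)) :
    ∀ (i : ι) (l : List ι) (j : ι),
      (walkAlong seg i l j).support.dropLast
        = (((i :: l).zip (l ++ [j])).map fun p => (seg p.1 p.2).support.dropLast).flatten
  | i, [], j => by simp [walkAlong]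
  | i, a :: t, j => by
    show ((seg i a).append (walkAlong seg a t j)).support.dropLast = _
    rw [dropLast_support_append, walkAlong_support_dropLast seg a t j]
    simp [List.zip_cons_cons]

lemma walkAlong_length {ι : Type*} {v : ι → V}
    (seg : ∀ i j : ι, G.Walk (v i) (v j)) :
    ∀ (i : ι) (l : List ι) (j : ι),
      (walkAlong seg i l j).length
        = (((i :: l).zip (l ++ [j])).map fun p => (seg p.1 p.2).length).sum
  | i, [], j => by simp [walkAlong]
  | i, a :: t, j => by
    show ((seg i a).append (walkAlong seg a t j)).length = _
    rw [Walk.length_append, walkAlong_length seg a t j]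
    simp [List.zip_cons_cons]

lemma isCycle_of_dropLast_nodup {x : V} (p : G.Walk x x) (hl : 3 ≤ p.length)
    (h : p.support.dropLast.Nodup) : p.IsCycle := by
  have hnn : ¬ p.Nil := by rw [Walk.not_nil_iff_lt_length]; omega
  obtain ⟨y, ha, q, rfl⟩ := Walk.not_nil_iff.mp hnn
  have hql : 2 ≤ q.length := by
    have := Walk.length_cons ha q
    omega
  obtain ⟨d, s, hq⟩ : ∃ d s, q.support = d :: s := ⟨_, _, q.support_eq_cons⟩
  rw [Walk.support_cons, hq, List.dropLast_cons₂, List.nodup_cons, ← hq] at h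
  have hqnodup : q.support.Nodup := by
    rw [← support_dropLast_concat q]
    refine List.Nodup.append h.2 (List.nodup_singleton x) ?_
    intro z hz1 hz2
    rw [List.mem_singleton] at hz2
    subst hz2
    exact absurd hz1 h.1
  have hqpath : q.IsPath := (Walk.isPath_def q).mpr hqnodup
  rw [Walk.cons_isCycle_iff]
  refine ⟨hqpath, fun hmem => ?_⟩
  have hmem' : s(x, y) ∈ q.reverse.edges := by
    rw [Walk.edges_reverse, List.mem_reverse]; exact hmem
  have hr : q.reverse.IsPath := hqpath.reverse
  have hrnn : ¬ q.reverse.Nil := by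
    rw [Walk.not_nil_iff_lt_length, Walk.length_reverse]; omega
  obtain ⟨z, hz, r, hrq⟩ := Walk.not_nil_iff.mp hrnn
  rw [hrq] at hmem' hr
  rw [Walk.edges_cons] at hmem'
  rw [Walk.cons_isPath_iff] at hr
  rcases List.mem_cons.mp hmem' with heq | hmem''
  · have hyz : y = z := by
      rcases Sym2.eq_iff.mp heq with ⟨_, h2⟩ | ⟨h1, _⟩
      · exact h2
      · exact absurd h1 hz.ne
    subst hyz
    have : r = Walk.nil := Walk.isPath_iff_eq_nil.mp hr.1
    have hlen : q.reverse.length = r.length + 1 := by rw [hrq]; simp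
    rw [this] at hlen
    rw [Walk.length_reverse] at hlen
    simp at hlen
    omega
  · exact hr.2 (Walk.fst_mem_support_of_mem_edges r hmem'')

lemma exists_path_in (S : Set V) (hS : ((⊤ : G.Subgraph).induce S).Connected)
    {a b : V} (ha : a ∈ S) (hb : b ∈ S) :
    ∃ p : G.Walk a b, p.IsPath ∧ ∀ z ∈ p.support, z ∈ S := by
  classical
  obtain ⟨w⟩ := hS.coe.preconnected ⟨a, ha⟩ ⟨b, hb⟩
  set w' : G.Walk a b := w.map ((⊤ : G.Subgraph).induce S).hom with hw'
  refine ⟨w'.toPath, w'.toPath.2, fun z hz => ?_⟩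
  have hz' : z ∈ w'.support := Walk.support_toPath_subset w' hz
  obtain ⟨t, _, rfl⟩ := List.mem_map.mp (Eq.mp (congrArg (z ∈ ·) (Walk.support_map _ w)) hz')
  exact t.2

lemma two_mul_length_le_sum : ∀ L : List ℕ, (∀ z ∈ L, 2 ≤ z) → 2 * L.length ≤ L.sum
  | [], _ => by simp
  | a :: t, h => by
    have h1 := h a (by simp)
    have h2 := two_mul_length_le_sum t (fun z hz => h z (by simp [hz]))
    simp only [List.length_cons, List.sum_cons]
    omega

def loF (n : ℕ) (i : Fin n) : Fin (2 * n) :=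
  ⟨i.1, lt_of_lt_of_le i.2 (by omega)⟩

def hiF (n : ℕ) (i : Fin n) : Fin (2 * n) :=
  ⟨n + i.1, by have := i.2; omega⟩

lemma loF_ne_hiF (n : ℕ) (i j : Fin n) : loF n i ≠ hiF n j := by
  intro h
  have h' := congrArg Fin.val h
  have := i.2
  simp only [loF, hiF] at h'
  omega

lemma loF_inj {n : ℕ} {i j : Fin n} (h : i ≠ j) : loF n i ≠ loF n j := by
  intro h'
  have h'' := congrArg Fin.val h'
  simp only [loF] at h''
  exact h (Fin.ext h'')

lemma hiF_inj {n : ℕ} {i j : Fin n} (h : i ≠ j) : hiF n i ≠ hiF n j := by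
  intro h'
  have h'' := congrArg Fin.val h'
  simp only [hiF] at h''
  exact h (Fin.ext (by omega))

end ZSAux

open SimpleGraph ZSAux in
theorem stmt13 {V : Type*} (q n : ℕ) (hq : 2 ≤ q)
    (hzs : ∀ w : Fin n → Fin n → ZMod q,
      ∃ l : List (Fin n), IsCycle l ∧ cycleSum w l = 0)
    (G : SimpleGraph V) (hminor : HasCompleteMinor G (2 * n)) :
    ∃ (x : V) (c : G.Walk x x), c.IsCycle ∧ q ∣ c.length := by
  classical
  obtain ⟨B, hconn, hdisj, hedge⟩ := hminor
  choose u₀ hu₀ v₀ hv₀ hadj₀ using hedge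
  have hpath : ∀ (k : Fin (2 * n)) (a b : V), a ∈ B k → b ∈ B k →
      ∃ p : G.Walk a b, p.IsPath ∧ ∀ z ∈ p.support, z ∈ B k :=
    fun k a b ha hb => exists_path_in (B k) (hconn k) ha hb
  choose P hP hPs using hpath
  -- the connector vertices inside each super-node
  have hVD : ∀ i : Fin n, ∃ a b : V, a ∈ B (loF n i) ∧ b ∈ B (hiF n i) ∧ G.Adj a b :=
    fun i => ⟨u₀ _ _ (loF_ne_hiF n i i), v₀ _ _ (loF_ne_hiF n i i),
      hu₀ _ _ _, hv₀ _ _ _, hadj₀ _ _ _⟩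
  choose u v hu hv huv using hVD
  -- the segments
  have hSEG : ∀ i j : Fin n, ∃ p : G.Walk (v i) (v j),
      2 ≤ p.length ∧ ∃ L1 L2 : List V, p.support.dropLast = L1 ++ L2 ∧
        L1.Nodup ∧ L2.Nodup ∧ (∀ z ∈ L1, z ∈ B (hiF n i)) ∧
        (∀ z ∈ L2, z ∈ B (loF n j)) := by
    intro i j
    have hne : hiF n i ≠ loF n j := (loF_ne_hiF n j i).symm
    set x := u₀ (hiF n i) (loF n j) hne with hxdef
    set y := v₀ (hiF n i) (loF n j) hne with hydef
    have hx : x ∈ B (hiF n i) := hu₀ _ _ _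
    have hy : y ∈ B (loF n j) := hv₀ _ _ _
    have hxy : G.Adj x y := hadj₀ _ _ _
    set Pc := P (hiF n i) (v i) x (hv i) hx with hPc
    set Pa := P (loF n j) y (u j) hy (hu j) with hPa
    refine ⟨Pc.append (Walk.cons hxy (Pa.append (Walk.cons (huv j) Walk.nil))),
      ?_, Pc.support, Pa.support, ?_, (hP _ _ _ _ _).support_nodup,
      (hP _ _ _ _ _).support_nodup, hPs _ _ _ _ _, hPs _ _ _ _ _⟩
    · rw [Walk.length_append, Walk.length_cons, Walk.length_append, Walk.length_cons,
        Walk.length_nil]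
      omega
    · rw [dropLast_support_append]
      have hsup : (Walk.cons hxy (Pa.append (Walk.cons (huv j) Walk.nil))).support
          = (x :: Pa.support) ++ [v j] := by
        rw [Walk.support_cons, Walk.support_append, Walk.support_cons, Walk.support_nil]
        simp
      rw [hsup, List.dropLast_concat]
      conv_rhs => rw [← support_dropLast_concat Pc]
      simp only [List.append_assoc, List.singleton_append]
  choose seg hseglen L1 L2 hDeq hN1 hN2 hS1 hS2 using hSEG
  -- get a zero-sum cycle for the induced labeling
  obtain ⟨l, ⟨hnd, hlen2⟩, hsum⟩ := hzs fun i j => ((seg i j).length : ZMod q)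
  obtain ⟨a, t, rfl⟩ : ∃ a t, l = a :: t := by
    cases l with
    | nil => simp [IsCycle] at hlen2
    | cons a t => exact ⟨a, t, rfl⟩
  have hrot : (a :: t).rotate 1 = t ++ [a] := by
    rw [List.rotate_cons_succ, List.rotate_zero]
  obtain ⟨W, hW⟩ : ∃ W : G.Walk (v a) (v a), W = walkAlong seg a t a := ⟨_, rfl⟩
  obtain ⟨pairs, hpairs⟩ : ∃ L : List (Fin n × Fin n), L = (a :: t).zip (t ++ [a]) :=
    ⟨_, rfl⟩
  -- length
  have hWlen : W.length = (pairs.map fun p => (seg p.1 p.2).length).sum := by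
    rw [hW, hpairs]
    exact walkAlong_length seg a t a
  have hcast : (W.length : ZMod q) = 0 := by
    rw [hWlen]
    rw [cycleSum, hrot, ← hpairs] at hsum
    rw [← hsum, Nat.cast_list_sum, List.map_map]
    rfl
  have hdvd : q ∣ W.length := (ZMod.natCast_eq_zero_iff W.length q).mp hcast
  -- lower bound on length
  have hpairslen : 2 ≤ pairs.length := by
    have h2 : 2 ≤ (a :: t).length := hlen2
    rw [hpairs, List.length_zip]
    simp only [List.length_cons, List.length_append, List.length_nil] at h2 ⊢
    omega
  have hWlen3 : 3 ≤ W.length := by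
    have h2 : 2 * (pairs.map fun p => (seg p.1 p.2).length).length
        ≤ (pairs.map fun p => (seg p.1 p.2).length).sum := by
      apply two_mul_length_le_sum
      intro z hz
      obtain ⟨p, _, rfl⟩ := List.mem_map.mp hz
      exact hseglen p.1 p.2
    rw [List.length_map] at h2
    omega
  -- nodup of blocks
  have hblocknodup : ∀ i j : Fin n, (seg i j).support.dropLast.Nodup := by
    intro i j
    rw [hDeq i j, List.nodup_append]
    refine ⟨hN1 i j, hN2 i j, ?_⟩
    intro z hz1 z' hz2 hzz
    subst hzz
    exact Set.disjoint_left.mp (hdisj _ _ ((loF_ne_hiF n j i).symm))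
      (hS1 i j z hz1) (hS2 i j z hz2)
  have hblocksub : ∀ i j : Fin n, ∀ z ∈ (seg i j).support.dropLast,
      z ∈ B (hiF n i) ∨ z ∈ B (loF n j) := by
    intro i j z hz
    rw [hDeq i j] at hz
    rcases List.mem_append.mp hz with h | h
    · exact Or.inl (hS1 i j z h)
    · exact Or.inr (hS2 i j z h)
  have hblockdisj : ∀ i j i' j' : Fin n, i ≠ i' → j ≠ j' →
      List.Disjoint ((seg i j).support.dropLast) ((seg i' j').support.dropLast) := by
    intro i j i' j' hii hjj z hz hz'
    rcases hblocksub i j z hz with h | h <;> rcases hblocksub i' j' z hz' with h' | h'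
    · exact Set.disjoint_left.mp (hdisj _ _ (hiF_inj hii)) h h'
    · exact Set.disjoint_left.mp (hdisj _ _ ((loF_ne_hiF n j' i).symm)) h h'
    · exact Set.disjoint_left.mp (hdisj _ _ (loF_ne_hiF n j (i' : Fin n))) h h'
    · exact Set.disjoint_left.mp (hdisj _ _ (loF_inj hjj)) h h'
  -- pairwise distinctness of the pairs
  have hpairwise : pairs.Pairwise fun p p' => p.1 ≠ p'.1 ∧ p.2 ≠ p'.2 := by
    have hrotnd : ((a :: t).rotate 1).Nodup := List.nodup_rotate.mpr hnd
    rw [hrot] at hrotnd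
    rw [hpairs, List.pairwise_iff_getElem]
    intro m m' hm hm' hmm
    rw [List.getElem_zip, List.getElem_zip]
    constructor
    · intro hcontra
      have := (List.Nodup.getElem_inj_iff hnd).mp hcontra
      omega
    · intro hcontra
      have := (List.Nodup.getElem_inj_iff hrotnd).mp hcontra
      omega
  have hWnodup : W.support.dropLast.Nodup := by
    rw [hW, walkAlong_support_dropLast seg a t a, ← hpairs, List.nodup_flatten]
    constructor
    · intro bl hbl
      obtain ⟨p, _, rfl⟩ := List.mem_map.mp hbl
      exact hblocknodup p.1 p.2
    · refine List.Pairwise.map _ ?_ hpairwise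
      intro p p' hpp
      exact hblockdisj p.1 p.2 p'.1 p'.2 hpp.1 hpp.2
  exact ⟨v a, W, isCycle_of_dropLast_nodup W hWlen3 hWnodup, hdvd⟩
end

section
/- Every graph containing K_{16q} as a minor (for an integer q ≥ 2) contains a cycle of length divisible by q, assuming that every ZMod q-valued arc-labeling of the complete digraph on 8q vertices has a zero-sum directed cycle. -/
open SimpleGraph


section Build

variable {V : Type*} {G : SimpleGraph V} {n : ℕ} {x y : Fin n → V}

/-- Build the big walk from `x cur` to `y f` following the chain `cur :: rest`, closing at `f`. -/
def buildT (pa : ∀ i j : Fin n, G.Walk (x i) (y j)) (adj : ∀ i, G.Adj (y i) (x i)) (f : Fin n) :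
    (cur : Fin n) → (rest : List (Fin n)) → G.Walk (x cur) (y f)
  | cur, [] => pa cur f
  | cur, b :: rest => (pa cur b).append (Walk.cons (adj b) (buildT pa adj f b rest))

variable {pa : ∀ i j : Fin n, G.Walk (x i) (y j)} {adj : ∀ i, G.Adj (y i) (x i)}
  {P M : Fin n → Set V}
  (hsupp : ∀ i j, ∀ v ∈ (pa i j).support, v ∈ P i ∪ M j)

include hsupp in
lemma buildT_support_subset (f : Fin n) :
    ∀ (rest : List (Fin n)) (cur : Fin n), ∀ v ∈ (buildT pa adj f cur rest).support,
      (∃ t, (t = cur ∨ t ∈ rest) ∧ v ∈ P t) ∨ (∃ t ∈ rest, v ∈ M t) ∨ v ∈ M f := by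
  intro rest
  induction rest with
  | nil =>
    intro cur v hv
    rcases hsupp cur f v hv with h | h
    · exact Or.inl ⟨cur, Or.inl rfl, h⟩
    · exact Or.inr (Or.inr h)
  | cons b rest ih =>
    intro cur v hv
    rw [buildT, Walk.mem_support_append_iff] at hv
    rcases hv with hv | hv
    · rcases hsupp cur b v hv with h | h
      · exact Or.inl ⟨cur, Or.inl rfl, h⟩
      · exact Or.inr (Or.inl ⟨b, by simp, h⟩)
    · rw [Walk.support_cons, List.mem_cons] at hv
      rcases hv with rfl | hv
      · rcases hsupp cur b _ (Walk.end_mem_support _) with h | h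
        · exact Or.inl ⟨cur, Or.inl rfl, h⟩
        · exact Or.inr (Or.inl ⟨b, by simp, h⟩)
      · rcases ih b v hv with ⟨t, ht, hP⟩ | ⟨t, ht, hM⟩ | h
        · rcases ht with rfl | ht
          · exact Or.inl ⟨t, Or.inr (by simp), hP⟩
          · exact Or.inl ⟨t, Or.inr (by simp [ht]), hP⟩
        · exact Or.inr (Or.inl ⟨t, by simp [ht], hM⟩)
        · exact Or.inr (Or.inr h)

variable (hpath : ∀ i j, (pa i j).IsPath)
  (hPP : ∀ i j : Fin n, i ≠ j → Disjoint (P i) (P j))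
  (hMM : ∀ i j : Fin n, i ≠ j → Disjoint (M i) (M j))
  (hPM : ∀ i j : Fin n, Disjoint (P i) (M j))

include hsupp hpath hPP hMM hPM in
lemma buildT_support_nodup (f : Fin n) :
    ∀ (rest : List (Fin n)) (cur : Fin n), (cur :: rest).Nodup → f ∉ rest →
      (buildT pa adj f cur rest).support.Nodup := by
  intro rest
  induction rest with
  | nil => intro cur _ _; exact (hpath cur f).support_nodup
  | cons b rest ih =>
    intro cur hnd hf
    have hsup_eq : (buildT pa adj f cur (b :: rest)).support
        = (pa cur b).support ++ (buildT pa adj f b rest).support := by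
      rw [buildT, Walk.support_append, Walk.support_cons, List.tail_cons]
    rw [hsup_eq]
    rw [List.nodup_cons] at hnd
    refine List.Nodup.append (hpath cur b).support_nodup
      (ih b hnd.2 (fun h => hf (by simp [h]))) ?_
    · intro v hv1 hv2
      have h1 := hsupp cur b v hv1
      have h2 := buildT_support_subset hsupp f rest b v hv2
      have hcur_ne_b : cur ≠ b := fun h => hnd.1 (by simp [h])
      have hcur_nmem : cur ∉ rest := fun h => hnd.1 (by simp [h])
      have hb_nmem : b ∉ rest := (List.nodup_cons.mp hnd.2).1
      have hf_ne_b : f ≠ b := fun h => hf (by simp [h])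
      rcases h1 with h1 | h1
      · rcases h2 with ⟨t, ht, hP⟩ | ⟨t, _, hM⟩ | h
        · have hct : cur ≠ t := by
            rcases ht with rfl | ht
            · exact hcur_ne_b
            · exact fun h => hcur_nmem (h ▸ ht)
          exact (hPP cur t hct).ne_of_mem h1 hP rfl
        · exact (hPM cur t).ne_of_mem h1 hM rfl
        · exact (hPM cur f).ne_of_mem h1 h rfl
      · rcases h2 with ⟨t, _, hP⟩ | ⟨t, ht, hM⟩ | h
        · exact (hPM t b).ne_of_mem hP h1 rfl
        · have : b ≠ t := fun h => hb_nmem (h ▸ ht)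
          exact (hMM b t this).ne_of_mem h1 hM rfl
        · exact (hMM b f (Ne.symm hf_ne_b)).ne_of_mem h1 h rfl

lemma buildT_length (f : Fin n) :
    ∀ (rest : List (Fin n)) (cur : Fin n),
      (buildT pa adj f cur rest).length + 1
        = (((cur :: rest).zip (rest ++ [f])).map fun p => (pa p.1 p.2).length + 1).sum := by
  intro rest
  induction rest with
  | nil => intro cur; simp [buildT]
  | cons b rest ih =>
    intro cur
    have : (buildT pa adj f cur (b :: rest)).length
        = (pa cur b).length + 1 + (buildT pa adj f b rest).length := by
      rw [buildT, Walk.length_append, Walk.length_cons]; ring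
    rw [this]
    have hz : ((cur :: b :: rest).zip ((b :: rest) ++ [f]))
        = (cur, b) :: ((b :: rest).zip (rest ++ [f])) := by simp [List.zip]
    rw [hz, List.map_cons, List.sum_cons, ← ih b]
    ring

end Build


theorem stmt17 {V : Type*} (q : ℕ) (hq : 2 ≤ q)
    (hzs : ∀ w : Fin (8 * q) → Fin (8 * q) → ZMod q,
      ∃ l : List (Fin (8 * q)), IsCycle l ∧ cycleSum w l = 0)
    (G : SimpleGraph V) (hminor : HasCompleteMinor G (16 * q)) :
    ∃ (x : V) (c : G.Walk x x), c.IsCycle ∧ q ∣ c.length := by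
  classical
  obtain ⟨B, hconn, hdisj, hadjB⟩ := hminor
  haveI : NeZero q := ⟨by omega⟩
  set pi : Fin (8 * q) → Fin (16 * q) := fun i => ⟨2 * i.1, by have := i.2; omega⟩ with hpi
  set mi : Fin (8 * q) → Fin (16 * q) := fun i => ⟨2 * i.1 + 1, by have := i.2; omega⟩ with hmi
  have hpm_ne : ∀ i j, pi i ≠ mi j := by
    intro i j h
    simp only [hpi, hmi, Fin.mk.injEq] at h
    omega
  have hpi_inj : ∀ i j : Fin (8 * q), i ≠ j → pi i ≠ pi j := by
    intro i j hij h
    simp only [hpi, Fin.mk.injEq] at h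
    exact hij (Fin.ext (by omega))
  have hmi_inj : ∀ i j : Fin (8 * q), i ≠ j → mi i ≠ mi j := by
    intro i j hij h
    simp only [hmi, Fin.mk.injEq] at h
    exact hij (Fin.ext (by omega))
  choose xx hx yy hy hxyadj using fun i => hadjB (pi i) (mi i) (hpm_ne i i)
  set P : Fin (8 * q) → Set V := fun i => B (pi i) with hPdef
  set M : Fin (8 * q) → Set V := fun i => B (mi i) with hMdef
  have hPP : ∀ i j : Fin (8 * q), i ≠ j → Disjoint (P i) (P j) :=
    fun i j hij => hdisj _ _ (hpi_inj i j hij)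
  have hMM : ∀ i j : Fin (8 * q), i ≠ j → Disjoint (M i) (M j) :=
    fun i j hij => hdisj _ _ (hmi_inj i j hij)
  have hPM : ∀ i j : Fin (8 * q), Disjoint (P i) (M j) :=
    fun i j => hdisj _ _ (hpm_ne i j)
  -- walks inside a single branch set
  have key : ∀ (k : Fin (16 * q)) (u v : V), u ∈ B k → v ∈ B k →
      ∃ p : G.Walk u v, ∀ w ∈ p.support, w ∈ B k := by
    intro k u v hu hv
    have hreach := (hconn k) ⟨u, hu⟩ ⟨v, hv⟩
    obtain ⟨W⟩ := hreach
    refine ⟨W.map ((⊤ : G.Subgraph).induce (B k)).hom, ?_⟩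
    intro w hw
    have hw : w ∈ W.support.map ((⊤ : G.Subgraph).induce (B k)).hom := by
      rw [← SimpleGraph.Walk.support_map]; exact hw
    rw [List.mem_map] at hw
    obtain ⟨s, _, rfl⟩ := hw
    exact s.2
  -- paths between designated vertices
  have hpa : ∀ i j : Fin (8 * q), ∃ p : G.Walk (xx i) (yy j),
      p.IsPath ∧ ∀ v ∈ p.support, v ∈ P i ∪ M j := by
    intro i j
    by_cases hij : i = j
    · subst hij
      refine ⟨Walk.cons (hxyadj i) Walk.nil, ?_, ?_⟩
      · rw [Walk.isPath_def]
        simp only [Walk.support_cons, Walk.support_nil, List.nodup_cons, List.mem_singleton,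
          List.nodup_nil, and_true]
        exact ⟨(hPM i i).ne_of_mem (hx i) (hy i), by simp⟩
      · intro v hv
        simp only [Walk.support_cons, Walk.support_nil, List.mem_cons,
          List.mem_singleton, List.not_mem_nil, or_false] at hv
        rcases hv with rfl | rfl
        · exact Or.inl (hx i)
        · exact Or.inr (hy i)
    · obtain ⟨u, hu, v, hv, huv⟩ := hadjB (pi i) (mi j) (hpm_ne i j)
      obtain ⟨p1, hp1⟩ := key (pi i) (xx i) u (hx i) hu
      obtain ⟨p2, hp2⟩ := key (mi j) v (yy j) hv (hy j)
      refine ⟨(p1.append (Walk.cons huv p2)).bypass, Walk.bypass_isPath _, ?_⟩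
      intro z hz
      have hz' := Walk.support_bypass_subset _ hz
      rw [Walk.mem_support_append_iff] at hz'
      rcases hz' with hz' | hz'
      · exact Or.inl (hp1 z hz')
      · rw [Walk.support_cons, List.mem_cons] at hz'
        rcases hz' with hz' | hz'
        · exact Or.inl (by rw [hz']; exact hu)
        · exact Or.inr (hp2 z hz')
  choose pa hpa1 hpa2 using hpa
  have adjyx : ∀ i, G.Adj (yy i) (xx i) := fun i => (hxyadj i).symm
  set w : Fin (8 * q) → Fin (8 * q) → ZMod q :=
    fun i j => (((pa i j).length + 1 : ℕ) : ZMod q) with hwdef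
  obtain ⟨l, ⟨hlnd, hllen⟩, hlsum⟩ := hzs w
  match l, hlnd, hllen, hlsum with
  | [], _, hllen, _ => simp at hllen
  | [a], _, hllen, _ => simp at hllen
  | a :: b :: rest, hlnd, hllen, hlsum =>
  have ha_nmem : a ∉ b :: rest := (List.nodup_cons.mp hlnd).1
  have hnd' : (b :: rest).Nodup := (List.nodup_cons.mp hlnd).2
  have hab : a ≠ b := fun h => ha_nmem (by simp [h])
  refine ⟨yy a, Walk.cons (adjyx a) (buildT pa adjyx a a (b :: rest)), ?_, ?_⟩
  · rw [Walk.cons_isCycle_iff]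
    constructor
    · rw [Walk.isPath_def]
      exact buildT_support_nodup hpa2 hpa1 hPP hMM hPM a (b :: rest) a hlnd ha_nmem
    · intro he
      rw [buildT] at he
      rw [Walk.edges_append, Walk.edges_cons, List.mem_append, List.mem_cons] at he
      rcases he with he | he | he
      · have hmem := hpa2 a b _ (Walk.fst_mem_support_of_mem_edges _ he)
        rcases hmem with hmem | hmem
        · exact (hPM a a).ne_of_mem hmem (hy a) rfl
        · exact (hMM a b hab).ne_of_mem (hy a) hmem rfl
      · rw [Sym2.eq_iff] at he
        rcases he with ⟨h1, _⟩ | ⟨h1, _⟩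
        · exact (hMM a b hab).ne_of_mem (hy a) (h1 ▸ hy b) rfl
        · exact (hPM b a).ne_of_mem (hx b) (hy a) h1.symm
      · have hmem := buildT_support_subset hpa2 a rest b _
          (Walk.snd_mem_support_of_mem_edges _ he)
        rcases hmem with ⟨t, ht, hP⟩ | ⟨t, _, hM⟩ | h
        · have hat : a ≠ t := by
            intro h; subst h
            rcases ht with rfl | ht
            · exact hab rfl
            · exact ha_nmem (by simp [ht])
          exact (hPP a t hat).ne_of_mem (hx a) hP rfl
        · exact (hPM a t).ne_of_mem (hx a) hM rfl
        · exact (hPM a a).ne_of_mem (hx a) h rfl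
  · have hlen := buildT_length (pa := pa) (adj := adjyx) a (b :: rest) a
    have hcast : ((Walk.cons (adjyx a) (buildT pa adjyx a a (b :: rest))).length : ZMod q)
        = cycleSum w (a :: b :: rest) := by
      rw [Walk.length_cons, hlen]
      rw [cycleSum]
      have hrot : (a :: b :: rest).rotate 1 = (b :: rest) ++ [a] := by
        rw [List.rotate_cons_succ, List.rotate_zero]
      rw [hrot, Nat.cast_list_sum, List.map_map]
      rfl
    rw [← ZMod.natCast_eq_zero_iff]
    rw [hcast, hlsum]
end
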